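/- arXiv:math/0612756 — 7 statements merged into one kernel-verified Lean document; each statement's English description precedes it below -/
import Mathlib

section
/- Let F be a Hausdorff locally convex topological vector space over ℝ, let (F_i)_{i∈ℕ} be a sequence of Fréchet spaces, and let p_i : F_i → F be continuous linear maps. Let F̃ be a Fréchet space and p : F̃ → F a continuous linear map such that the range of p is contained in the union of the ranges of the p_i. Then there exists an index i such that the range of p is contained in the range of p_i. -/
/-!
For each `i` let `Kᵢ = {(x, y) ∈ F̃ × Fᵢ | q x = pᵢ y}`, a closed subspace of a Fréchet space. The
first projection `Kᵢ → F̃` has range `q⁻¹(range pᵢ)`, and these ranges cover `F̃`. By Baire one of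
them is non-meagre, and a continuous linear map out of a complete metrizable space with non-meagre
range is surjective (Banach–Schauder): a non-meagre range makes the closure of the image of every
neighbourhood of `0` a neighbourhood of `0`, and completeness removes the closure by successive
approximation. Surjectivity of `Kᵢ → F̃` says exactly that `range q ⊆ range pᵢ`.
-/

open Set Filter Topology Uniformity Pointwise

section NhdsZeroSequence

variable {E : Type*} [AddCommMonoid E]

theorem exists_hasAntitoneBasis_nhds_zero_add_subset [TopologicalSpace E] [ContinuousAdd E]
    [FirstCountableTopology E] {U : Set E} (hU : U ∈ 𝓝 0) :
    ∃ V : ℕ → Set E, (𝓝 0).HasAntitoneBasis V ∧ V 0 ⊆ U ∧ ∀ n, V (n + 1) + V (n + 1) ⊆ V n := by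
  obtain ⟨B, hB⟩ := (𝓝 (0 : E)).exists_antitone_basis
  -- Stated as an implication so that `half` is a plain function of `S` and the recursion below
  -- is not dependent.
  have half : ∀ S : Set E, ∃ T, S ∈ 𝓝 0 → T ∈ 𝓝 0 ∧ T + T ⊆ S := fun S ↦ by
    by_cases hS : S ∈ 𝓝 0
    · obtain ⟨T, hT, hTS⟩ := exists_nhds_zero_half hS
      exact ⟨T, fun _ ↦ ⟨hT, add_subset_iff.2 hTS⟩⟩
    · exact ⟨∅, fun h ↦ absurd h hS⟩
  choose half hhalf using half
  let V : ℕ → Set E := fun n ↦ Nat.rec (U ∩ B 0) (fun n S ↦ half (S ∩ B (n + 1))) n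
  have hV : ∀ n, V n ∈ 𝓝 0 ∧ V n ⊆ B n := by
    intro n
    induction n with
    | zero => exact ⟨inter_mem hU (hB.mem 0), inter_subset_right⟩
    | succ n ih =>
      obtain ⟨hmem, hsub⟩ := hhalf _ (inter_mem ih.1 (hB.mem (n + 1)))
      exact ⟨hmem, (subset_add_left _ (mem_of_mem_nhds hmem)).trans (hsub.trans inter_subset_right)⟩
  have hadd : ∀ n, V (n + 1) + V (n + 1) ⊆ V n := fun n ↦
    ((hhalf _ (inter_mem (hV n).1 (hB.mem (n + 1)))).2).trans inter_subset_left
  refine ⟨V, ⟨?_, ?_⟩, inter_subset_left, hadd⟩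
  · exact hB.toHasBasis.to_hasBasis' (fun n _ ↦ ⟨n, trivial, (hV n).2⟩)
      (fun n _ ↦ (hV n).1)
  · exact antitone_nat_of_succ_le fun n ↦
      (subset_add_left _ (mem_of_mem_nhds (hV (n + 1)).1)).trans (hadd n)

variable {V : ℕ → Set E}

theorem sum_mem_of_add_subset (h0 : ∀ n, (0 : E) ∈ V n)
    (hadd : ∀ n, V (n + 1) + V (n + 1) ⊆ V n) {u : ℕ → E} (hu : ∀ n, u n ∈ V (n + 1))
    (t : Finset ℕ) : ∀ n, (∀ k ∈ t, n ≤ k) → ∑ k ∈ t, u k ∈ V n := by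
  have hanti : Antitone V := antitone_nat_of_succ_le fun n ↦
    (subset_add_left _ (h0 (n + 1))).trans (hadd n)
  refine Finset.induction_on_min t (fun n _ ↦ h0 n) fun a t hat ih n hn ↦ ?_
  have hna : n ≤ a := hn a (Finset.mem_insert_self a t)
  rw [Finset.sum_insert fun ha ↦ lt_irrefl a (hat a ha)]
  exact hadd n (add_mem_add (hanti (by omega) (hu a))
    (hanti (by omega) (ih (a + 1) fun k hk ↦ hat k hk)))

end NhdsZeroSequence

theorem summable_of_add_subset {E : Type*} [AddCommGroup E] [UniformSpace E]
    [IsUniformAddGroup E] [CompleteSpace E] {V : ℕ → Set E} (hV : (𝓝 0).HasAntitoneBasis V)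
    (hadd : ∀ n, V (n + 1) + V (n + 1) ⊆ V n) {u : ℕ → E} (hu : ∀ n, u n ∈ V (n + 1)) :
    Summable u := by
  refine summable_iff_vanishing.2 fun e he ↦ ?_
  obtain ⟨N, hN⟩ := hV.mem_iff.1 he
  refine ⟨Finset.range N, fun t ht ↦ hN ?_⟩
  refine sum_mem_of_add_subset (fun n ↦ mem_of_mem_nhds (hV.mem n)) hadd hu t N fun k hk ↦ ?_
  simpa using Finset.disjoint_left.1 ht hk

theorem Filter.HasAntitoneBasis.tendsto_closure_image_smallSets {X Y : Type*}
    [TopologicalSpace X] [TopologicalSpace Y] [RegularSpace Y] {x : X} {V : ℕ → Set X}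
    (hV : (𝓝 x).HasAntitoneBasis V) {f : X → Y} (hf : ContinuousAt f x) :
    Tendsto (fun n ↦ closure (f '' V n)) atTop (𝓝 (f x)).smallSets := by
  refine tendsto_smallSets_iff.2 fun t ht ↦ ?_
  obtain ⟨W, hW, hWc, hWt⟩ := exists_mem_nhds_isClosed_subset ht
  obtain ⟨N, hN⟩ := hV.mem_iff.1 (hf hW)
  exact eventually_atTop.2 ⟨N, fun n hn ↦
    (closure_minimal (image_subset_iff.2 ((hV.antitone hn).trans hN)) hWc).trans hWt⟩

theorem exists_seq_sub_sum_mem {G E : Type*} [AddCommGroup G] {C : ℕ → Set G} {V : ℕ → Set E}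
    (f : E → G) (hstep : ∀ n, ∀ z ∈ C n, ∃ x ∈ V n, z - f x ∈ C (n + 1)) {y : G} (hy : y ∈ C 0) :
    ∃ u : ℕ → E, ∀ n, u n ∈ V n ∧ y - ∑ k ∈ Finset.range n, f (u k) ∈ C n := by
  choose g hgV hgC using hstep
  let r : (n : ℕ) → C n := fun n ↦ Nat.rec ⟨y, hy⟩ (fun n z ↦ ⟨z - f (g n z z.2), hgC n z z.2⟩) n
  have hr : ∀ n, (r n).1 = y - ∑ k ∈ Finset.range n, f (g k (r k).1 (r k).2) := by
    intro n
    induction n with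
    | zero => simp [r]
    | succ n ih =>
      rw [Finset.sum_range_succ, sub_add_eq_sub_sub, ← ih]
  exact ⟨fun n ↦ g n (r n).1 (r n).2, fun n ↦ ⟨hgV _ _ _, hr n ▸ (r n).2⟩⟩

section TopologicalAddGroup

variable {G : Type*} [AddCommGroup G] [TopologicalSpace G] [IsTopologicalAddGroup G]

theorem closure_mem_nhds_zero_of_sub_subset {S T : Set G} (hS : ¬ IsNowhereDense S)
    (hST : S - S ⊆ T) : closure T ∈ 𝓝 0 := by
  obtain ⟨z, hz⟩ := nonempty_iff_ne_empty.2 hS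
  have hshift : Tendsto (· + z) (𝓝 0) (𝓝 z) := by
    simpa using (continuous_add_const z).tendsto 0
  filter_upwards [hshift (mem_interior_iff_mem_nhds.1 hz)] with w hw
  simpa using map_mem_closure₂ continuous_sub hw (interior_subset hz)
    fun a ha b hb ↦ hST (sub_mem_sub ha hb)

theorem exists_sub_mem_of_mem_closure {S T : Set G} {z : G} (hz : z ∈ closure S)
    (hT : T ∈ 𝓝 0) : ∃ s ∈ S, z - s ∈ T := by
  obtain ⟨s, hs, hsz⟩ := mem_closure_iff_nhds_zero.1 hz _ (neg_mem_nhds_zero G hT)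
  exact ⟨s, hs, by simpa using hsz⟩

end TopologicalAddGroup

theorem AddMonoidHom.image_mem_nhds_zero_of_forall_closure_image_mem_nhds_zero
    {E G : Type*} [AddCommGroup E] [UniformSpace E] [IsUniformAddGroup E] [CompleteSpace E]
    [FirstCountableTopology E] [AddCommGroup G] [TopologicalSpace G] [IsTopologicalAddGroup G]
    [T2Space G] (f : E →+ G) (hf : Continuous f)
    (hcl : ∀ U ∈ 𝓝 (0 : E), closure (f '' U) ∈ 𝓝 0) {U : Set E} (hU : U ∈ 𝓝 0) :
    f '' U ∈ 𝓝 0 := by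
  obtain ⟨U', hU', hU'c, hU'U⟩ := exists_mem_nhds_isClosed_subset hU
  obtain ⟨V, hV, hV0, hadd⟩ := exists_hasAntitoneBasis_nhds_zero_add_subset hU'
  have h0 : ∀ n, (0 : E) ∈ V n := fun n ↦ mem_of_mem_nhds (hV.mem n)
  refine mem_of_superset (hcl _ (hV.mem 1)) fun y hy ↦ ?_
  obtain ⟨u, hu⟩ := exists_seq_sub_sum_mem (C := fun n ↦ closure (f '' V (n + 1)))
    (V := fun n ↦ V (n + 1)) f
    (fun n z hz ↦ by simpa using exists_sub_mem_of_mem_closure hz (hcl _ (hV.mem (n + 2)))) hy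
  obtain ⟨x, hx⟩ := summable_of_add_subset hV hadd fun n ↦ (hu n).1
  have hxU : x ∈ U' := hU'c.mem_of_tendsto hx.tendsto_sum_nat <| .of_forall fun n ↦
    hV0 <| sum_mem_of_add_subset h0 hadd (fun n ↦ (hu n).1) _ 0 fun _ _ ↦ Nat.zero_le _
  have hrem : Tendsto (fun n ↦ y - ∑ k ∈ Finset.range n, f (u k)) atTop (𝓝 0) := by
    refine Tendsto.of_smallSets ?_ (.of_forall fun n ↦ (hu n).2)
    have := (hV.tendsto_closure_image_smallSets hf.continuousAt).comp (tendsto_add_atTop_nat 1)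
    rwa [map_zero] at this
  refine ⟨x, hU'U hxU, tendsto_nhds_unique ((hf.tendsto x).comp hx.tendsto_sum_nat) ?_⟩
  simpa [Function.comp_def, map_sum] using (tendsto_const_nhds (x := y)).sub hrem

section TopologicalVectorSpace

variable {𝕜 E G : Type*} [NontriviallyNormedField 𝕜]
  [AddCommGroup G] [Module 𝕜 G] [TopologicalSpace G]

theorem IsMeagre.smul₀ [ContinuousConstSMul 𝕜 G] {s : Set G} (hs : IsMeagre s) {c : 𝕜}
    (hc : c ≠ 0) : IsMeagre (c • s) := by
  rw [← preimage_smul_inv₀ hc]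
  exact hs.preimage_of_isOpenMap (continuous_const_smul _) (isOpenMap_smul₀ (inv_ne_zero hc))

variable [AddCommGroup E] [Module 𝕜 E] [TopologicalSpace E] [ContinuousSMul 𝕜 E]

namespace ContinuousLinearMap

theorem not_isMeagre_image_of_not_isMeagre_range [ContinuousConstSMul 𝕜 G] (f : E →L[𝕜] G)
    (hf : ¬ IsMeagre (range f)) {V : Set E} (hV : V ∈ 𝓝 0) : ¬ IsMeagre (f '' V) := by
  obtain ⟨c, hc⟩ := NormedField.exists_one_lt_norm 𝕜
  have hc0 : c ≠ 0 := norm_pos_iff.1 (one_pos.trans hc)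
  refine fun hV' ↦ hf <|
    IsMeagre.mono ?_ (isMeagre_iUnion fun n : ℕ ↦ hV'.smul₀ (pow_ne_zero n hc0))
  rintro _ ⟨x, rfl⟩
  obtain ⟨r, -, hr⟩ := (absorbent_nhds_zero (𝕜 := 𝕜) hV x).exists_pos
  obtain ⟨n, hn⟩ := pow_unbounded_of_one_lt r hc
  obtain ⟨v, hv, rfl⟩ := hr (c ^ n) (by rw [norm_pow]; exact hn.le) rfl
  exact mem_iUnion.2 ⟨n, map_smul f (c ^ n) v ▸ smul_mem_smul_set (mem_image_of_mem f hv)⟩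

variable [IsTopologicalAddGroup E] [IsTopologicalAddGroup G] [ContinuousSMul 𝕜 G]

theorem closure_image_mem_nhds_zero_of_not_isMeagre_range (f : E →L[𝕜] G)
    (hf : ¬ IsMeagre (range f)) {U : Set E} (hU : U ∈ 𝓝 0) : closure (f '' U) ∈ 𝓝 0 := by
  obtain ⟨V, hV, hVU⟩ := exists_nhds_half_neg hU
  refine closure_mem_nhds_zero_of_sub_subset
    (fun h ↦ not_isMeagre_image_of_not_isMeagre_range f hf hV h.isMeagre) ?_
  rw [← image_sub]
  exact image_mono (sub_subset_iff.2 hVU)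

end ContinuousLinearMap

end TopologicalVectorSpace

theorem ContinuousLinearMap.surjective_of_not_isMeagre_range {𝕜 E G : Type*}
    [NontriviallyNormedField 𝕜] [AddCommGroup E] [Module 𝕜 E] [UniformSpace E]
    [IsUniformAddGroup E] [ContinuousSMul 𝕜 E] [CompleteSpace E] [FirstCountableTopology E]
    [AddCommGroup G] [Module 𝕜 G] [TopologicalSpace G] [IsTopologicalAddGroup G]
    [ContinuousSMul 𝕜 G] [T2Space G] (f : E →L[𝕜] G) (hf : ¬ IsMeagre (range f)) :
    Function.Surjective f := by
  have hrange : range f ∈ 𝓝 0 := image_univ (f := f) ▸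
    (f : E →+ G).image_mem_nhds_zero_of_forall_closure_image_mem_nhds_zero f.continuous
      (fun _ ↦ closure_image_mem_nhds_zero_of_not_isMeagre_range f hf) univ_mem
  exact LinearMap.range_eq_top.1 <|
    (LinearMap.range (f : E →ₗ[𝕜] G)).eq_top_of_nonempty_interior'
      ⟨0, mem_interior_iff_mem_nhds.2 hrange⟩

namespace Submodule

variable {R M : Type*} [Ring R] [AddCommGroup M] [Module R M]

instance [TopologicalSpace M] [FirstCountableTopology M] (S : Submodule R M) :
    FirstCountableTopology S :=
  TopologicalSpace.Subtype.firstCountableTopology (S : Set M)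

instance [UniformSpace M] [IsUniformAddGroup M] (S : Submodule R M) : IsUniformAddGroup S :=
  S.toAddSubgroup.isUniformAddGroup

end Submodule

namespace ContinuousLinearMap

variable {R M N P : Type*} [Semiring R] [AddCommMonoid M] [AddCommMonoid N] [AddCommMonoid P]
  [Module R M] [Module R N] [Module R P] [TopologicalSpace M] [TopologicalSpace N]
  [TopologicalSpace P]

def pullbackFst (q : M →L[R] P) (p : N →L[R] P) :
    (q.comp (fst R M N)).eqLocus (p.comp (snd R M N)) →L[R] M :=
  (fst R M N).comp (Submodule.subtypeL _)

theorem range_pullbackFst (q : M →L[R] P) (p : N →L[R] P) :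
    range (pullbackFst q p) = q ⁻¹' range p := by
  ext x
  constructor
  · rintro ⟨⟨⟨x, y⟩, hxy⟩, rfl⟩
    exact ⟨y, hxy.symm⟩
  · rintro ⟨y, hy⟩
    exact ⟨⟨(x, y), hy.symm⟩, rfl⟩

end ContinuousLinearMap

theorem grothendieck_range_subset_general
    (F : Type*) [AddCommGroup F] [Module ℝ F] [TopologicalSpace F] [T2Space F]
    (Fi : ℕ → Type*) [∀ i, AddCommGroup (Fi i)] [∀ i, Module ℝ (Fi i)]
    [∀ i, UniformSpace (Fi i)] [∀ i, IsUniformAddGroup (Fi i)] [∀ i, ContinuousSMul ℝ (Fi i)]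
    [∀ i, CompleteSpace (Fi i)]
    [∀ i, TopologicalSpace.MetrizableSpace (Fi i)]
    (p : ∀ i, Fi i →L[ℝ] F)
    (Ft : Type*) [AddCommGroup Ft] [Module ℝ Ft] [UniformSpace Ft] [IsUniformAddGroup Ft]
    [ContinuousSMul ℝ Ft] [CompleteSpace Ft]
    [TopologicalSpace.MetrizableSpace Ft]
    (q : Ft →L[ℝ] F)
    (hrange : Set.range q ⊆ ⋃ i, Set.range (p i)) :
    ∃ i, Set.range q ⊆ Set.range (p i) := by
  -- makes `Ft` a Baire space
  have : (𝓤 Ft).IsCountablyGenerated := IsUniformAddGroup.uniformity_countably_generated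
  obtain ⟨i, hi⟩ : ∃ i, ¬ IsMeagre (range (q.pullbackFst (p i))) := by
    by_contra! h
    refine not_isMeagre_of_mem_residual (univ_mem (f := residual Ft)) ?_
    have hcover : ⋃ i, range (q.pullbackFst (p i)) = univ := by
      simpa only [ContinuousLinearMap.range_pullbackFst, ← preimage_iUnion] using
        preimage_eq_univ_iff.2 hrange
    exact hcover ▸ isMeagre_iUnion h
  refine ⟨i, preimage_eq_univ_iff.1 ?_⟩
  rw [← ContinuousLinearMap.range_pullbackFst, range_eq_univ]
  exact (q.pullbackFst (p i)).surjective_of_not_isMeagre_range hi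

/-- **Grothendieck's factorization theorem (range part).**
If `F` is a Hausdorff locally convex space, `(Fi i)` a sequence of Fréchet spaces with
continuous linear maps `p i : Fi i → F`, and `p : Ft → F` a continuous linear map from a
Fréchet space whose range is contained in the union of the ranges of the `p i`, then the
range of `p` is contained in the range of some single `p i`. -/
theorem grothendieck_range_subset
    (F : Type*) [AddCommGroup F] [Module ℝ F] [TopologicalSpace F] [IsTopologicalAddGroup F]
    [ContinuousSMul ℝ F] [LocallyConvexSpace ℝ F] [T2Space F]
    (Fi : ℕ → Type*) [∀ i, AddCommGroup (Fi i)] [∀ i, Module ℝ (Fi i)]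
    [∀ i, UniformSpace (Fi i)] [∀ i, IsUniformAddGroup (Fi i)] [∀ i, ContinuousSMul ℝ (Fi i)]
    [∀ i, LocallyConvexSpace ℝ (Fi i)] [∀ i, T2Space (Fi i)] [∀ i, CompleteSpace (Fi i)]
    [∀ i, TopologicalSpace.MetrizableSpace (Fi i)]
    (p : ∀ i, Fi i →L[ℝ] F)
    (Ft : Type*) [AddCommGroup Ft] [Module ℝ Ft] [UniformSpace Ft] [IsUniformAddGroup Ft]
    [ContinuousSMul ℝ Ft] [LocallyConvexSpace ℝ Ft] [T2Space Ft] [CompleteSpace Ft]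
    [TopologicalSpace.MetrizableSpace Ft]
    (q : Ft →L[ℝ] F)
    (hrange : Set.range q ⊆ ⋃ i, Set.range (p i)) :
    ∃ i, Set.range q ⊆ Set.range (p i) :=
  grothendieck_range_subset_general F Fi p Ft q hrange
end

section
/- Let F be a Hausdorff locally convex topological vector space over ℝ, let E be a Fréchet space and q : E → F an injective continuous linear map, let F̃ be a Fréchet space and p : F̃ → F a continuous linear map whose range is contained in the range of q. Then there exists a continuous linear map p̃ : F̃ → E such that p = q ∘ p̃. -/
open Set Filter Topology Pointwise Uniformity

/-!
The candidate `p̃ = q⁻¹ ∘ p` is linear, and its graph `{(x, e) | p x = q e}` is closed because `F`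
is Hausdorff, so it suffices to have the closed graph theorem for complete metrizable topological
vector spaces. As for Banach spaces, this follows from the open mapping theorem applied to the
projection of the graph onto `Ft`. For a continuous linear surjection `f` onto a Baire space,
Baire's theorem makes `closure (f '' U)` a neighbourhood of zero for each neighbourhood `U` of
zero. Completeness of the source then removes the closure: successive approximations whose
increments lie in closed neighbourhoods `V n` of zero with `V (n + 1) + V (n + 1) ⊆ V n` form a
Cauchy sequence.
-/

theorem Nat.exists_seq_of_forall_exists_succ {α : Type*} {P : ℕ → α → Prop}
    {R : ℕ → α → α → Prop} {a : α} (ha : P 0 a) (h : ∀ n a, P n a → ∃ b, P (n + 1) b ∧ R n a b) :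
    ∃ u : ℕ → α, u 0 = a ∧ (∀ n, P n (u n)) ∧ ∀ n, R n (u n) (u (n + 1)) := by
  choose! next hnextP hnextR using h
  let u : ℕ → α := fun n => Nat.rec a next n
  have hu : ∀ n, P n (u n) := fun n => by
    induction n with
    | zero => exact ha
    | succ n ih => exact hnextP n _ ih
  exact ⟨u, rfl, hu, fun n => hnextR n _ (hu n)⟩

section HalvingBasis

variable {X : Type*} [AddCommGroup X] [TopologicalSpace X]

structure IsHalvingBasis (V : ℕ → Set X) : Prop where
  hasAntitoneBasis : (𝓝 (0 : X)).HasAntitoneBasis V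
  isClosed : ∀ n, IsClosed (V n)
  add_subset : ∀ n, V (n + 1) + V (n + 1) ⊆ V n

theorem exists_isHalvingBasis_subset [IsTopologicalAddGroup X] [FirstCountableTopology X]
    {U : Set X} (hU : U ∈ 𝓝 0) : ∃ V, IsHalvingBasis V ∧ V 0 ⊆ U := by
  obtain ⟨b, hb⟩ := (𝓝 (0 : X)).exists_antitone_basis
  have half : ∀ n (S : Set X), S ∈ 𝓝 0 ∧ IsClosed S →
      ∃ T, (T ∈ 𝓝 0 ∧ IsClosed T) ∧ T + T ⊆ S ∩ b n := fun n S hS => by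
    obtain ⟨T, hT, hTc, -, hTS⟩ :=
      exists_closed_nhds_zero_neg_eq_add_subset (inter_mem hS.1 (hb.mem n))
    exact ⟨T, ⟨hT, hTc⟩, hTS⟩
  obtain ⟨V₀, hV₀, hV₀c, -, hV₀U⟩ := exists_closed_nhds_zero_neg_eq_add_subset hU
  obtain ⟨V, rfl, hV, hVadd⟩ := Nat.exists_seq_of_forall_exists_succ ⟨hV₀, hV₀c⟩ half
  have hsucc : ∀ n, V (n + 1) ⊆ V (n + 1) + V (n + 1) := fun n =>
    subset_add_left _ (mem_of_mem_nhds (hV (n + 1)).1)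
  have hbasis : (𝓝 (0 : X)).HasBasis (fun _ => True) V :=
    hb.1.to_hasBasis' (fun n _ => ⟨n + 1, trivial,
      (hsucc n).trans ((hVadd n).trans inter_subset_right)⟩) fun n _ => (hV n).1
  have hanti : Antitone V :=
    antitone_nat_of_succ_le fun n => (hsucc n).trans ((hVadd n).trans inter_subset_left)
  exact ⟨V, ⟨⟨hbasis, hanti⟩, fun n => (hV n).2, fun n => (hVadd n).trans inter_subset_left⟩,
    (subset_add_left _ (mem_of_mem_nhds hV₀)).trans hV₀U⟩

namespace IsHalvingBasis

variable {V : ℕ → Set X}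

theorem zero_mem (hV : IsHalvingBasis V) (n : ℕ) : (0 : X) ∈ V n :=
  mem_of_mem_nhds (hV.hasAntitoneBasis.mem n)

theorem sub_mem_of_le (hV : IsHalvingBasis V) {s : ℕ → X}
    (hs : ∀ n, s (n + 1) - s n ∈ V (n + 1)) {m n : ℕ} (hnm : n ≤ m) : s m - s n ∈ V n := by
  induction hnm using Nat.decreasingInduction with
  | self => simpa using hV.zero_mem m
  | of_succ k _ ih =>
    simpa using hV.add_subset k (add_mem_add ih (hs k))

theorem tendsto_zero_of_mem_closure_image {Y : Type*} [AddCommGroup Y] [TopologicalSpace Y]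
    [IsTopologicalAddGroup Y] (hV : IsHalvingBasis V) {f : X →+ Y} (hf : ContinuousAt f 0)
    {a : ℕ → Y} (ha : ∀ n, a n ∈ closure (f '' V n)) : Tendsto a atTop (𝓝 0) := by
  refine (closed_nhds_basis (0 : Y)).tendsto_right_iff.2 fun W ⟨hW, hWc⟩ => ?_
  obtain ⟨N, -, hN⟩ := hV.hasAntitoneBasis.1.mem_iff.1
    (hf.preimage_mem_nhds (by rwa [map_zero]))
  refine eventually_atTop.2 ⟨N, fun n hn => ?_⟩
  refine closure_minimal ?_ hWc (ha n)
  exact (image_mono (hV.hasAntitoneBasis.2 hn)).trans (image_subset_iff.2 hN)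

end IsHalvingBasis

end HalvingBasis

theorem IsHalvingBasis.exists_tendsto {X : Type*} [AddCommGroup X] [UniformSpace X]
    [IsUniformAddGroup X] [CompleteSpace X] {V : ℕ → Set X} (hV : IsHalvingBasis V) {s : ℕ → X}
    (hs : ∀ n, s (n + 1) - s n ∈ V (n + 1)) :
    ∃ x, Tendsto s atTop (𝓝 x) ∧ x - s 0 ∈ V 0 := by
  have hcauchy : CauchySeq s :=
    (hV.hasAntitoneBasis.1.uniformity_of_nhds_zero_swapped.cauchySeq_iff').2 fun n _ =>
      ⟨n, fun m hm => hV.sub_mem_of_le hs hm⟩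
  obtain ⟨x, hx⟩ := cauchySeq_tendsto_of_complete hcauchy
  refine ⟨x, hx, (hV.isClosed 0).mem_of_tendsto (hx.sub_const (s 0)) ?_⟩
  exact Eventually.of_forall fun m => hV.sub_mem_of_le hs m.zero_le

theorem exists_seq_sub_mem_closure_image {X Y : Type*} [AddCommGroup X] [AddCommGroup Y]
    [TopologicalSpace Y] [IsTopologicalAddGroup Y] {V : ℕ → Set X} {f : X →+ Y}
    (hf : ∀ n, closure (f '' V n) ∈ 𝓝 0) {y : Y} (hy : y ∈ closure (f '' V 1)) :
    ∃ s : ℕ → X, s 0 = 0 ∧ (∀ n, s (n + 1) - s n ∈ V (n + 1)) ∧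
      ∀ n, y - f (s n) ∈ closure (f '' V (n + 1)) := by
  suffices ∀ n t, y - f t ∈ closure (f '' V (n + 1)) →
      ∃ t', y - f t' ∈ closure (f '' V (n + 1 + 1)) ∧ t' - t ∈ V (n + 1) by
    obtain ⟨s, hs0, hsy, hsV⟩ :=
      Nat.exists_seq_of_forall_exists_succ (a := (0 : X)) (by simpa using hy) this
    exact ⟨s, hs0, hsV, hsy⟩
  intro n t ht
  obtain ⟨_, ⟨v, hv, rfl⟩, hvy⟩ :=
    mem_closure_iff_nhds_zero.1 ht _ (neg_mem_nhds_zero _ (hf (n + 2)))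
  have hsub : y - f (t + v) = -(f v - (y - f t)) := by rw [map_add]; abel
  exact ⟨t + v, hsub ▸ hvy, by simpa using hv⟩

theorem AddMonoidHom.image_mem_nhds_zero_of_closure_image_mem_nhds {X Y : Type*}
    [AddCommGroup X] [UniformSpace X] [IsUniformAddGroup X] [CompleteSpace X]
    [FirstCountableTopology X] [AddCommGroup Y] [TopologicalSpace Y] [IsTopologicalAddGroup Y]
    [T2Space Y] (f : X →+ Y) (hf : Continuous f) (h : ∀ U ∈ 𝓝 (0 : X), closure (f '' U) ∈ 𝓝 0)
    {U : Set X} (hU : U ∈ 𝓝 0) : f '' U ∈ 𝓝 0 := by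
  obtain ⟨V, hV, hVU⟩ := exists_isHalvingBasis_subset hU
  refine mem_of_superset (h _ (hV.hasAntitoneBasis.mem 1)) fun y hy => ?_
  obtain ⟨s, hs0, hsV, hsy⟩ :=
    exists_seq_sub_mem_closure_image (fun n => h _ (hV.hasAntitoneBasis.mem n)) hy
  obtain ⟨x, hx, hxV⟩ := hV.exists_tendsto hsV
  have hfs : Tendsto (fun n => y - f (s n)) atTop (𝓝 0) :=
    hV.tendsto_zero_of_mem_closure_image hf.continuousAt fun n =>
      closure_mono (image_mono (hV.hasAntitoneBasis.2 n.le_succ)) (hsy n)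
  have hfy : Tendsto (fun n => f (s n)) atTop (𝓝 y) := by
    simpa using (tendsto_const_nhds (x := y)).sub hfs
  exact ⟨x, hVU (by simpa [hs0] using hxV), tendsto_nhds_unique ((hf.tendsto x).comp hx) hfy⟩

theorem LinearMap.closure_image_mem_nhds_zero {X Y : Type*} [AddCommGroup X] [Module ℝ X]
    [TopologicalSpace X] [IsTopologicalAddGroup X] [ContinuousSMul ℝ X] [AddCommGroup Y]
    [Module ℝ Y] [TopologicalSpace Y] [IsTopologicalAddGroup Y] [ContinuousSMul ℝ Y]
    [BaireSpace Y] (f : X →ₗ[ℝ] Y) (hf : Function.Surjective f) {U : Set X} (hU : U ∈ 𝓝 0) :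
    closure (f '' U) ∈ 𝓝 0 := by
  obtain ⟨V, hV, -, hVneg, hVU⟩ := exists_closed_nhds_zero_neg_eq_add_subset hU
  set C := closure (f '' V)
  have hcover : ⋃ n : ℕ, ((n + 1 : ℕ) : ℝ) • C = univ := by
    refine eq_univ_of_forall fun y => ?_
    obtain ⟨x, rfl⟩ := hf y
    obtain ⟨n, hn⟩ := ((tendsto_natCast_atTop_cobounded.comp (tendsto_add_atTop_nat 1)).eventually
      (absorbent_nhds_zero (𝕜 := ℝ) hV x)).exists
    obtain ⟨v, hv, hvx⟩ := hn rfl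
    refine mem_iUnion.2 ⟨n, ?_⟩
    rw [← hvx, map_smul]
    exact smul_mem_smul_set (subset_closure (mem_image_of_mem f hv))
  obtain ⟨n, hn⟩ := nonempty_interior_of_iUnion_of_closed
    (fun n => isClosed_closure.smul_of_ne_zero (by positivity)) hcover
  obtain ⟨z, hz⟩ : (interior C).Nonempty := by
    rwa [interior_smul₀ (by positivity), smul_set_nonempty] at hn
  have hshift : {u | u + z ∈ interior C} ∈ 𝓝 0 :=
    (continuous_add_const z).continuousAt.preimage_mem_nhds
      (by simpa using isOpen_interior.mem_nhds hz)
  refine mem_of_superset hshift fun u hu => ?_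
  have key : (u + z) - z ∈ closure (f '' U) :=
    map_mem_closure₂ continuous_sub (interior_subset hu) (interior_subset hz) ?_
  · simpa using key
  rintro _ ⟨a, ha, rfl⟩ _ ⟨b, hb, rfl⟩
  refine ⟨a + -b, hVU (add_mem_add ha ?_), by simp [sub_eq_add_neg]⟩
  rw [← hVneg]
  exact neg_mem_neg.2 hb

section OpenMapping

variable {X Y : Type*} [AddCommGroup X] [Module ℝ X] [UniformSpace X] [IsUniformAddGroup X]
  [ContinuousSMul ℝ X] [CompleteSpace X] [FirstCountableTopology X]
  [AddCommGroup Y] [Module ℝ Y] [TopologicalSpace Y] [IsTopologicalAddGroup Y]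
  [ContinuousSMul ℝ Y] [BaireSpace Y] [T2Space Y]

theorem LinearMap.image_mem_nhds_zero_of_surjective (f : X →ₗ[ℝ] Y) (hf : Continuous f)
    (hsurj : Function.Surjective f) {U : Set X} (hU : U ∈ 𝓝 0) : f '' U ∈ 𝓝 0 :=
  f.toAddMonoidHom.image_mem_nhds_zero_of_closure_image_mem_nhds hf
    (fun _ => f.closure_image_mem_nhds_zero hsurj) hU

theorem LinearEquiv.continuous_symm_of_baireSpace (e : X ≃ₗ[ℝ] Y) (he : Continuous e) :
    Continuous e.symm := by
  refine continuous_of_continuousAt_zero e.symm.toLinearMap.toAddMonoidHom fun U hU => ?_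
  rw [LinearMap.toAddMonoidHom_coe, LinearEquiv.coe_coe, map_zero] at hU
  show e.symm ⁻¹' U ∈ 𝓝 0
  rw [← e.image_eq_preimage_symm]
  exact e.toLinearMap.image_mem_nhds_zero_of_surjective he e.surjective hU

end OpenMapping

theorem LinearMap.continuous_of_isClosed_graph_of_firstCountable {X Y : Type*}
    [AddCommGroup X] [Module ℝ X] [UniformSpace X] [IsUniformAddGroup X] [ContinuousSMul ℝ X]
    [CompleteSpace X] [FirstCountableTopology X] [T2Space X]
    [AddCommGroup Y] [Module ℝ Y] [UniformSpace Y] [IsUniformAddGroup Y] [ContinuousSMul ℝ Y]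
    [CompleteSpace Y] [FirstCountableTopology Y]
    (g : X →ₗ[ℝ] Y) (hg : IsClosed (g.graph : Set (X × Y))) : Continuous g := by
  have : CompleteSpace g.graph := hg.completeSpace_coe
  have : IsUniformAddGroup g.graph := g.graph.toAddSubgroup.isUniformAddGroup
  have : FirstCountableTopology g.graph := TopologicalSpace.Subtype.firstCountableTopology _
  have : (𝓤 X).IsCountablyGenerated := IsUniformAddGroup.uniformity_countably_generated
  let φ : X ≃ₗ[ℝ] g.graph := (LinearEquiv.ofLeftInverse (f := LinearMap.id.prod g)
    (g := Prod.fst) fun _ => rfl).trans (LinearEquiv.ofEq _ _ g.graph_eq_range_prod.symm)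
  have hφ : Continuous φ := φ.symm.continuous_symm_of_baireSpace continuous_subtype_val.fst
  exact (continuous_subtype_val.comp hφ).snd

theorem grothendieck_factorization_general
    (F : Type*) [AddCommGroup F] [Module ℝ F] [TopologicalSpace F] [T2Space F]
    (E : Type*) [AddCommGroup E] [Module ℝ E] [UniformSpace E] [IsUniformAddGroup E]
    [ContinuousSMul ℝ E] [CompleteSpace E]
    [TopologicalSpace.MetrizableSpace E]
    (q : E →L[ℝ] F) (hq : Function.Injective q)
    (Ft : Type*) [AddCommGroup Ft] [Module ℝ Ft] [UniformSpace Ft] [IsUniformAddGroup Ft]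
    [ContinuousSMul ℝ Ft] [CompleteSpace Ft]
    [TopologicalSpace.MetrizableSpace Ft]
    (p : Ft →L[ℝ] F)
    (hrange : Set.range p ⊆ Set.range q) :
    ∃ pt : Ft →L[ℝ] E, ∀ x, q (pt x) = p x := by
  let g : Ft →ₗ[ℝ] E := (LinearEquiv.ofInjective q.toLinearMap hq).symm.toLinearMap ∘ₗ
    p.toLinearMap.codRestrict _ fun x => hrange ⟨x, rfl⟩
  have hqg : ∀ x, q (g x) = p x := fun x =>
    congrArg Subtype.val ((LinearEquiv.ofInjective q.toLinearMap hq).apply_symm_apply _)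
  have hgraph : (g.graph : Set (Ft × E)) = {v | p v.1 = q v.2} := by
    ext ⟨x, e⟩
    simp [LinearMap.mem_graph_iff, ← hqg, hq.eq_iff, eq_comm]
  have hclosed : IsClosed (g.graph : Set (Ft × E)) :=
    hgraph ▸ isClosed_eq (p.continuous.comp continuous_fst) (q.continuous.comp continuous_snd)
  exact ⟨⟨g, g.continuous_of_isClosed_graph_of_firstCountable hclosed⟩, hqg⟩

/-- **Grothendieck's factorization theorem (factorization part).**
If `F` is a Hausdorff locally convex space, `E` a Fréchet space with an injective continuous
linear map `q : E → F`, and `p : Ft → F` a continuous linear map from a Fréchet space `Ft`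
whose range is contained in the range of `q`, then `p` factors as `q ∘ p̃` for some
continuous linear map `p̃ : Ft → E`. -/
theorem grothendieck_factorization
    (F : Type*) [AddCommGroup F] [Module ℝ F] [TopologicalSpace F] [IsTopologicalAddGroup F]
    [ContinuousSMul ℝ F] [LocallyConvexSpace ℝ F] [T2Space F]
    (E : Type*) [AddCommGroup E] [Module ℝ E] [UniformSpace E] [IsUniformAddGroup E]
    [ContinuousSMul ℝ E] [LocallyConvexSpace ℝ E] [T2Space E] [CompleteSpace E]
    [TopologicalSpace.MetrizableSpace E]
    (q : E →L[ℝ] F) (hq : Function.Injective q)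
    (Ft : Type*) [AddCommGroup Ft] [Module ℝ Ft] [UniformSpace Ft] [IsUniformAddGroup Ft]
    [ContinuousSMul ℝ Ft] [LocallyConvexSpace ℝ Ft] [T2Space Ft] [CompleteSpace Ft]
    [TopologicalSpace.MetrizableSpace Ft]
    (p : Ft →L[ℝ] F)
    (hrange : Set.range p ⊆ Set.range q) :
    ∃ pt : Ft →L[ℝ] E, ∀ x, q (pt x) = p x :=
  grothendieck_factorization_general F E q hq Ft p hrange
end

section
/- Let F be a Hausdorff locally convex topological vector space over ℝ, let (E_i)_{i∈ℕ} be a sequence of Fréchet spaces, and let p_i : E_i → F be continuous linear maps with F equal to the union of the ranges of the p_i (i.e., F is an (LF)-space with respect to this data). Then there exists a countable family (G_i)_{i∈ℕ} of Fréchet subspaces of F such that G_i equals the range of p_i as a set, the union of the G_i is F, and every Fréchet subspace G̃ of F is contained (as a set) in some G_i with continuous inclusion map G̃ → G_i. -/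
/-- A Fréchet subspace of a Hausdorff locally convex space `F`: a linear subspace equipped
with a (generally finer) complete metrizable locally convex Hausdorff vector topology such
that the inclusion into `F` is continuous. -/
structure FrechetSubspace (F : Type*) [AddCommGroup F] [Module ℝ F] [TopologicalSpace F] where
  toSubmodule : Submodule ℝ F
  uniformSpace : UniformSpace toSubmodule
  uniformAddGroup : @IsUniformAddGroup toSubmodule uniformSpace _
  continuousSMul : @ContinuousSMul ℝ toSubmodule _ _ uniformSpace.toTopologicalSpace
  locallyConvex : @LocallyConvexSpace ℝ toSubmodule _ _ _ _ uniformSpace.toTopologicalSpace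
  t2 : @T2Space toSubmodule uniformSpace.toTopologicalSpace
  complete : @CompleteSpace toSubmodule uniformSpace
  metrizable : @TopologicalSpace.MetrizableSpace toSubmodule uniformSpace.toTopologicalSpace
  continuous_val : @Continuous toSubmodule F uniformSpace.toTopologicalSpace _ Subtype.val

/-!
The Fréchet structure on `range (p i)` is that of `Ei i ⧸ ker (p i)`, transported along the
injective map induced by `p i`. Now let `G̃` be a Fréchet subspace of `F`. The countably many sets
`G̃ ∩ G i` cover the Baire space `G̃`, so one of them is non-meagre in `G̃`. The fibre product
`{(x, y) ∈ G i × G̃ | x = y}` is closed, hence an F-space, and its projection to `G̃` has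
non-meagre range. By the open mapping theorem for F-spaces (Banach's successive approximation
argument, with neighbourhoods of zero in place of balls) this projection is surjective and open:
so `G̃ ⊆ G i`, and the inclusion, which factors through the projection, is continuous.
-/

open Filter Set Topology Uniformity Pointwise

theorem Finset.sum_Ico_mem_of_forall_add_mem {M : Type*} [AddCommMonoid M] {S : ℕ → Set M}
    (hS₀ : ∀ n, 0 ∈ S n) (hS : ∀ n, ∀ a ∈ S (n + 1), ∀ b ∈ S (n + 1), a + b ∈ S n)
    {a : ℕ → M} (ha : ∀ n, a n ∈ S (n + 1)) {n m : ℕ} (hnm : n ≤ m) :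
    ∑ k ∈ Finset.Ico n m, a k ∈ S n := by
  obtain ⟨k, rfl⟩ := Nat.exists_eq_add_of_le hnm
  induction k generalizing n with
  | zero => simpa using hS₀ n
  | succ k ih =>
    rw [Finset.sum_eq_sum_Ico_succ_bot (by omega), show n + (k + 1) = n + 1 + k by omega]
    exact hS n _ (ha n) _ (ih (by omega))

theorem exists_seq_nhds_zero_tendsto_sum_range_mem {X : Type*} [AddCommGroup X] [UniformSpace X]
    [IsUniformAddGroup X] [CompleteSpace X] [FirstCountableTopology X] {U : Set X}
    (hU : U ∈ 𝓝 0) :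
    ∃ V : ℕ → Set X, (∀ n, V n ∈ 𝓝 0) ∧ ∀ a : ℕ → X, (∀ n, a n ∈ V n) →
      ∃ x ∈ U, Tendsto (fun n ↦ ∑ k ∈ Finset.range n, a k) atTop (𝓝 x) := by
  obtain ⟨U₁, hU₁, hU₁_closed, hU₁U⟩ := exists_mem_nhds_isClosed_subset hU
  obtain ⟨u, hu⟩ := (𝓝 (0 : X)).exists_antitone_basis
  choose! half half_mem half_add using fun s (hs : s ∈ 𝓝 (0 : X)) ↦ exists_nhds_zero_half hs
  -- `S (n + 1) + S (n + 1) ⊆ S n`, so all tails `∑ k ∈ Ico n m, a k` stay in `S n`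
  let S : ℕ → Set X := fun n ↦ Nat.rec U₁ (fun n s ↦ half s ∩ u n) n
  have hS : ∀ n, S n ∈ 𝓝 0 := by
    intro n
    induction n with
    | zero => exact hU₁
    | succ n ih => exact inter_mem (half_mem _ ih) (hu.mem n)
  refine ⟨fun n ↦ S (n + 1), fun n ↦ hS (n + 1), fun a ha ↦ ?_⟩
  have htail : ∀ {n m}, n ≤ m → ∑ k ∈ Finset.Ico n m, a k ∈ S n :=
    Finset.sum_Ico_mem_of_forall_add_mem (fun n ↦ mem_of_mem_nhds (hS n))
      (fun n _ hx _ hy ↦ half_add _ (hS n) _ hx.1 _ hy.1) ha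
  have hcauchy : CauchySeq fun n ↦ ∑ k ∈ Finset.range n, a k := by
    have hbasis : (𝓤 X).HasBasis (fun _ ↦ True) fun i ↦ {p : X × X | p.1 - p.2 ∈ u i} := by
      rw [uniformity_eq_comap_nhds_zero_swapped]
      exact hu.toHasBasis.comap fun p : X × X ↦ p.1 - p.2
    refine hbasis.cauchySeq_iff'.2 fun i _ ↦ ⟨i + 1, fun n hn ↦ ?_⟩
    rw [mem_ofPred_eq, ← Finset.sum_Ico_eq_sub _ hn]
    exact (htail hn).2
  obtain ⟨x, hx⟩ := cauchySeq_tendsto_of_complete hcauchy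
  refine ⟨x, hU₁U (hU₁_closed.mem_of_tendsto hx (Eventually.of_forall fun n ↦ ?_)), hx⟩
  rw [Finset.range_eq_Ico]
  exact htail n.zero_le

section OpenMapping

variable {X Y : Type*} [AddCommGroup X] [Module ℝ X] [AddCommGroup Y] [Module ℝ Y]
  [TopologicalSpace Y]

theorem LinearMap.not_isMeagre_image_of_mem_nhds_zero [TopologicalSpace X] [ContinuousSMul ℝ X]
    [ContinuousConstSMul ℝ Y] (f : X →ₗ[ℝ] Y) (hf : ¬IsMeagre (Set.range f)) {V : Set X}
    (hV : V ∈ 𝓝 0) : ¬IsMeagre (f '' V) := by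
  intro hV_meagre
  have hcover : Set.range f ⊆ ⋃ n : ℕ, ((n : ℝ) + 1) • (f '' V) := by
    rintro _ ⟨x, rfl⟩
    obtain ⟨r, -, hr⟩ := (absorbent_nhds_zero (𝕜 := ℝ) hV x).exists_pos
    obtain ⟨n, hn⟩ := exists_nat_ge r
    obtain ⟨v, hv, rfl⟩ := hr ((n : ℝ) + 1)
      (by rw [Real.norm_of_nonneg (by positivity)]; linarith) (mem_singleton x)
    exact mem_iUnion.2 ⟨n, by rw [map_smul]; exact smul_mem_smul_set (mem_image_of_mem f hv)⟩
  exact hf <| (isMeagre_iUnion fun n : ℕ ↦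
    (Homeomorph.smulOfNeZero _ (Nat.cast_add_one_ne_zero n)).isInducing.isMeagre_image
      hV_meagre).mono hcover

theorem LinearMap.closure_image_mem_nhds_zero_of_not_isMeagre_range [TopologicalSpace X]
    [IsTopologicalAddGroup X] [ContinuousSMul ℝ X] [IsTopologicalAddGroup Y] [ContinuousConstSMul ℝ Y] (f : X →ₗ[ℝ] Y)
    (hf : ¬IsMeagre (Set.range f)) {U : Set X} (hU : U ∈ 𝓝 0) : closure (f '' U) ∈ 𝓝 0 := by
  obtain ⟨V, hV, hVU⟩ := exists_nhds_half_neg hU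
  obtain ⟨y, hy⟩ : (interior (closure (f '' V))).Nonempty := by
    rw [nonempty_iff_ne_empty]
    exact fun h ↦ f.not_isMeagre_image_of_mem_nhds_zero hf hV (IsNowhereDense.isMeagre h)
  refine mem_of_superset ((isOpenMap_sub_right y _ isOpen_interior).mem_nhds ⟨y, hy, sub_self y⟩) ?_
  rintro _ ⟨w, hw, rfl⟩
  refine map_mem_closure₂ continuous_sub (interior_subset hw) (interior_subset hy) ?_
  rintro _ ⟨a, ha, rfl⟩ _ ⟨b, hb, rfl⟩
  rw [← map_sub]
  exact mem_image_of_mem f (hVU a ha b hb)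

theorem LinearMap.image_mem_nhds_zero_of_not_isMeagre_range [UniformSpace X] [IsUniformAddGroup X]
    [ContinuousSMul ℝ X] [CompleteSpace X] [FirstCountableTopology X] [IsTopologicalAddGroup Y]
    [ContinuousConstSMul ℝ Y] [FirstCountableTopology Y] [T2Space Y] (f : X →ₗ[ℝ] Y)
    (hf : Continuous f) (hr : ¬IsMeagre (Set.range f)) {U : Set X} (hU : U ∈ 𝓝 0) :
    f '' U ∈ 𝓝 0 := by
  obtain ⟨V, hV, hsum⟩ := exists_seq_nhds_zero_tendsto_sum_range_mem hU
  obtain ⟨W, hW⟩ := (𝓝 (0 : Y)).exists_antitone_basis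
  have hclosure n : closure (f '' V n) ∈ 𝓝 0 :=
    f.closure_image_mem_nhds_zero_of_not_isMeagre_range hr (hV n)
  have hstep n (c : Y) : ∃ a : X, c ∈ closure (f '' V n) →
      a ∈ V n ∧ c - f a ∈ closure (f '' V (n + 1)) ∩ W n := by
    by_cases hc : c ∈ closure (f '' V n)
    · obtain ⟨_, ⟨a, ha, rfl⟩, hac⟩ := mem_closure_iff_nhds_zero.1 hc _
        (neg_mem_nhds_zero Y (inter_mem (hclosure (n + 1)) (hW.mem n)))
      exact ⟨a, fun _ ↦ ⟨ha, by simpa using hac⟩⟩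
    · exact ⟨0, fun h ↦ absurd h hc⟩
  choose! a ha using hstep
  refine mem_of_superset (hclosure 0) fun y hy ↦ ?_
  -- successive approximation: `c n` is what remains of `y` after `n` steps
  let c : ℕ → Y := fun n ↦ Nat.rec y (fun n c ↦ c - f (a n c)) n
  have hc n : c n ∈ closure (f '' V n) := by
    induction n with
    | zero => exact hy
    | succ n ih => exact (ha n (c n) ih).2.1
  have hc_eq n : c n = y - f (∑ k ∈ Finset.range n, a k (c k)) := by
    induction n with
    | zero => simp [c]
    | succ n ih => rw [Finset.sum_range_succ, map_add, ← sub_sub, ← ih]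
  have hc_tendsto : Tendsto c atTop (𝓝 0) := by
    refine (tendsto_add_atTop_iff_nat 1).1 (hW.toHasBasis.tendsto_right_iff.2 fun i _ ↦ ?_)
    filter_upwards [eventually_ge_atTop i] with n hn
    exact hW.antitone hn (ha n (c n) (hc n)).2.2
  obtain ⟨x, hxU, hx⟩ := hsum (fun n ↦ a n (c n)) fun n ↦ (ha n (c n) (hc n)).1
  refine ⟨x, hxU, tendsto_nhds_unique ((hf.tendsto x).comp hx) ?_⟩
  have hfs : (fun n ↦ f (∑ k ∈ Finset.range n, a k (c k))) = fun n ↦ y - c n := by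
    funext n
    rw [hc_eq n, sub_sub_cancel]
  rw [Function.comp_def, hfs]
  simpa using (tendsto_const_nhds (x := y)).sub hc_tendsto

theorem LinearMap.isOpenQuotientMap_of_not_isMeagre_range [UniformSpace X] [IsUniformAddGroup X]
    [ContinuousSMul ℝ X] [CompleteSpace X] [FirstCountableTopology X] [IsTopologicalAddGroup Y]
    [ContinuousSMul ℝ Y] [FirstCountableTopology Y] [T2Space Y] (f : X →ₗ[ℝ] Y)
    (hf : Continuous f) (hr : ¬IsMeagre (Set.range f)) : IsOpenQuotientMap f := by
  have hopen : IsOpenMap f := IsTopologicalAddGroup.isOpenMap_iff_nhds_zero.2 <|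
    le_map fun U hU ↦ f.image_mem_nhds_zero_of_not_isMeagre_range hf hr hU
  have hrange : LinearMap.range f = ⊤ := (LinearMap.range f).eq_top_of_nonempty_interior'
    ⟨0, hopen.isOpen_range.subset_interior_iff.2 subset_rfl (zero_mem (LinearMap.range f))⟩
  exact ⟨LinearMap.range_eq_top.1 hrange, hf, hopen⟩

end OpenMapping

theorem ContinuousLinearMap.exists_continuous_lift_of_not_isMeagre {X Y F : Type*}
    [AddCommGroup X] [Module ℝ X] [UniformSpace X] [IsUniformAddGroup X] [ContinuousSMul ℝ X]
    [CompleteSpace X] [FirstCountableTopology X] [AddCommGroup Y] [Module ℝ Y] [UniformSpace Y]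
    [IsUniformAddGroup Y] [ContinuousSMul ℝ Y] [CompleteSpace Y] [FirstCountableTopology Y]
    [T2Space Y] [AddCommGroup F] [Module ℝ F] [TopologicalSpace F] [T2Space F]
    (ι : X →L[ℝ] F) (hι : Function.Injective ι) (j : Y →L[ℝ] F)
    (hj : ¬IsMeagre (j ⁻¹' Set.range ι)) :
    ∃ g : Y → X, Continuous g ∧ ∀ y, ι (g y) = j y := by
  let H : Submodule ℝ (X × Y) := (ι.comp (.fst ℝ X Y)).eqLocus (j.comp (.snd ℝ X Y))
  have hH : IsClosed (H : Set (X × Y)) := ContinuousLinearMap.isClosed_eqLocus _ _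
  have : IsUniformAddGroup H := inferInstanceAs (IsUniformAddGroup H.toAddSubgroup)
  have : CompleteSpace H := hH.completeSpace_coe
  have : FirstCountableTopology H := inferInstanceAs (FirstCountableTopology (H : Set (X × Y)))
  let π : H →ₗ[ℝ] Y := LinearMap.snd ℝ X Y ∘ₗ H.subtype
  have hπ_range : Set.range π = j ⁻¹' Set.range ι := by
    ext y
    constructor
    · rintro ⟨⟨⟨x, y⟩, hxy⟩, rfl⟩
      exact ⟨x, hxy⟩
    · rintro ⟨x, hx⟩
      exact ⟨⟨(x, y), hx⟩, rfl⟩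
  have hπ : IsOpenQuotientMap π := π.isOpenQuotientMap_of_not_isMeagre_range
    (continuous_snd.comp continuous_subtype_val) (hπ_range ▸ hj)
  choose g hg using fun y ↦ hπ_range.subset (hπ.surjective.range_eq ▸ mem_univ y)
  have hgπ : g ∘ π = fun q ↦ q.1.1 := funext fun q ↦ hι (by simpa [π, hg] using q.2.symm)
  exact ⟨g, hπ.isQuotientMap.continuous_iff.2 (by rw [hgπ]; fun_prop), hg⟩

instance Submodule.locallyConvexSpace_quotient {𝕜 E : Type*} [Ring 𝕜] [PartialOrder 𝕜]
    [AddCommGroup E] [Module 𝕜 E] [TopologicalSpace E] [IsTopologicalAddGroup E]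
    [LocallyConvexSpace 𝕜 E] (K : Submodule 𝕜 E) : LocallyConvexSpace 𝕜 (E ⧸ K) := by
  refine LocallyConvexSpace.ofBasisZero 𝕜 (E ⧸ K) (K.mkQ '' ·) (fun s ↦ s ∈ 𝓝 0 ∧ Convex 𝕜 s)
    ?_ fun s hs ↦ hs.2.linear_image K.mkQ
  rw [← map_zero K.mkQ, ← K.isOpenQuotientMap_mkQ.map_nhds_eq]
  exact (LocallyConvexSpace.convex_basis_zero 𝕜 E).map _

namespace FrechetSubspace

section Construction

variable {F : Type*} [AddCommGroup F] [Module ℝ F] [TopologicalSpace F]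

/-- The range of an injective `ι : X →L[ℝ] F`, with the structure transported from `X`. -/
noncomputable def ofInjective {X : Type*} [AddCommGroup X] [Module ℝ X] [UniformSpace X]
    [IsUniformAddGroup X] [ContinuousSMul ℝ X] [LocallyConvexSpace ℝ X] [T2Space X]
    [CompleteSpace X] [TopologicalSpace.MetrizableSpace X] (ι : X →L[ℝ] F)
    (hι : Function.Injective ι) : FrechetSubspace F :=
  let e := LinearEquiv.ofInjective (ι : X →ₗ[ℝ] F) hι
  letI : UniformSpace (LinearMap.range (ι : X →ₗ[ℝ] F)) := .comap e.symm inferInstance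
  letI : TopologicalSpace (LinearMap.range (ι : X →ₗ[ℝ] F)) := UniformSpace.toTopologicalSpace
  have he : IsUniformInducing e.symm := ⟨rfl⟩
  have he' : Topology.IsEmbedding e.symm := ⟨he.isInducing, e.symm.injective⟩
  { toSubmodule := LinearMap.range (ι : X →ₗ[ℝ] F)
    uniformSpace := inferInstance
    uniformAddGroup := IsUniformAddGroup.comap e.symm
    continuousSMul := he.isInducing.continuousSMul continuous_id (map_smul e.symm _ _)
    locallyConvex := he.isInducing.locallyConvexSpace (f := e.symm.toLinearMap)
    t2 := he'.t2Space
    complete := (he.completeSpace_congr e.symm.surjective).2 inferInstance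
    metrizable := he'.metrizableSpace
    continuous_val := by
      have : (Subtype.val : LinearMap.range (ι : X →ₗ[ℝ] F) → F) = ι ∘ e.symm := by
        funext y
        exact (LinearEquiv.ofInjective_symm_apply (f := (ι : X →ₗ[ℝ] F)) y).symm
      rw [this]
      exact ι.continuous.comp he.isInducing.continuous }

variable {E : Type*} [AddCommGroup E] [Module ℝ E] [UniformSpace E] [IsUniformAddGroup E]
  [ContinuousSMul ℝ E] [LocallyConvexSpace ℝ E] [CompleteSpace E]
  [TopologicalSpace.MetrizableSpace E] [T2Space F]

/-- The range of `p` with the Fréchet structure of `E ⧸ ker p`. -/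
noncomputable def range (p : E →L[ℝ] F) : FrechetSubspace F :=
  letI : UniformSpace (E ⧸ p.ker) := IsTopologicalAddGroup.rightUniformSpace _
  haveI : IsUniformAddGroup (E ⧸ p.ker) := isUniformAddGroup_of_addCommGroup
  haveI : IsClosed (p.ker : Set E) := p.isClosed_ker
  haveI : FirstCountableTopology (E ⧸ p.ker) :=
    QuotientAddGroup.instFirstCountableTopology p.ker.toAddSubgroup
  haveI : CompleteSpace (E ⧸ p.ker) := QuotientAddGroup.completeSpace_right _ p.ker.toAddSubgroup
  haveI : (𝓤 (E ⧸ p.ker)).IsCountablyGenerated := IsUniformAddGroup.uniformity_countably_generated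
  haveI : TopologicalSpace.MetrizableSpace (E ⧸ p.ker) := UniformSpace.metrizableSpace
  ofInjective (p.ker.liftQL p le_rfl) (LinearMap.ker_eq_bot.1 (p.ker.ker_liftQ_eq_bot _ _ le_rfl))

theorem coe_range (p : E →L[ℝ] F) : ((range p).toSubmodule : Set F) = Set.range p := by
  change ((LinearMap.range (p.ker.liftQ (p : E →ₗ[ℝ] F) le_rfl) : Submodule ℝ F) : Set F) = _
  rw [Submodule.range_liftQ, LinearMap.coe_range]
  rfl

end Construction

section Carrier

variable {F : Type*} [AddCommGroup F] [Module ℝ F] [TopologicalSpace F] (G : FrechetSubspace F)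

/-- `G` as a type carrying its own Fréchet structure instead of the subspace topology from `F`. -/
def Carrier : Type _ := G.toSubmodule

instance : AddCommGroup G.Carrier := inferInstanceAs (AddCommGroup G.toSubmodule)
instance : Module ℝ G.Carrier := inferInstanceAs (Module ℝ G.toSubmodule)
instance : UniformSpace G.Carrier := G.uniformSpace
instance : IsUniformAddGroup G.Carrier := G.uniformAddGroup
instance : ContinuousSMul ℝ G.Carrier := G.continuousSMul
instance : T2Space G.Carrier := G.t2
instance : CompleteSpace G.Carrier := G.complete
instance : TopologicalSpace.MetrizableSpace G.Carrier := G.metrizable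

def subtypeL : G.Carrier →L[ℝ] F := ⟨G.toSubmodule.subtype, G.continuous_val⟩

end Carrier

theorem exists_continuous_inclusion {F : Type*} [AddCommGroup F] [Module ℝ F]
    [TopologicalSpace F] [T2Space F] {ι : Type*} [Countable ι]
    (G : ι → FrechetSubspace F) (Gt : FrechetSubspace F)
    (hcover : ∀ x ∈ Gt.toSubmodule, ∃ i, x ∈ (G i).toSubmodule) :
    ∃ i, ∃ h : (Gt.toSubmodule : Set F) ⊆ (G i).toSubmodule,
      Continuous[Gt.uniformSpace.toTopologicalSpace, (G i).uniformSpace.toTopologicalSpace]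
        (Set.inclusion h) := by
  -- makes `Gt.Carrier` completely metrizable, hence a Baire space
  have : (𝓤 Gt.Carrier).IsCountablyGenerated := IsUniformAddGroup.uniformity_countably_generated
  obtain ⟨i, hi⟩ : ∃ i, ¬IsMeagre (Gt.subtypeL ⁻¹' Set.range (G i).subtypeL) := by
    by_contra! h
    refine not_isMeagre_of_isOpen isOpen_univ univ_nonempty
      ((isMeagre_iUnion h).mono fun y _ ↦ ?_)
    obtain ⟨i, hi⟩ := hcover _ (y : Gt.toSubmodule).2
    exact mem_iUnion.2 ⟨i, (⟨_, hi⟩ : (G i).toSubmodule), rfl⟩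
  obtain ⟨g, hg, hgj⟩ :=
    (G i).subtypeL.exists_continuous_lift_of_not_isMeagre Subtype.val_injective Gt.subtypeL hi
  have h : (Gt.toSubmodule : Set F) ⊆ (G i).toSubmodule := fun x hx ↦
    (show (G i).subtypeL (g ⟨x, hx⟩) = x from hgj _) ▸ (g ⟨x, hx⟩ : (G i).toSubmodule).2
  have hg_eq : Set.inclusion h = (g : Gt.toSubmodule → (G i).toSubmodule) :=
    funext fun y ↦ Subtype.ext (hgj y).symm
  exact ⟨i, h, hg_eq ▸ hg⟩

end FrechetSubspace

theorem lf_space_frechetSubspace_cofinal_family_general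
    (F : Type*) [AddCommGroup F] [Module ℝ F] [TopologicalSpace F] [T2Space F]
    (Ei : ℕ → Type*) [∀ i, AddCommGroup (Ei i)] [∀ i, Module ℝ (Ei i)]
    [∀ i, UniformSpace (Ei i)] [∀ i, IsUniformAddGroup (Ei i)] [∀ i, ContinuousSMul ℝ (Ei i)]
    [∀ i, LocallyConvexSpace ℝ (Ei i)] [∀ i, CompleteSpace (Ei i)]
    [∀ i, TopologicalSpace.MetrizableSpace (Ei i)]
    (p : ∀ i, Ei i →L[ℝ] F)
    (hcover : ∀ x : F, ∃ i, x ∈ Set.range (p i)) :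
    ∃ G : ℕ → FrechetSubspace F,
      (∀ i, ((G i).toSubmodule : Set F) = Set.range (p i)) ∧
      (∀ x : F, ∃ i, x ∈ (G i).toSubmodule) ∧
      (∀ Gt : FrechetSubspace F,
        ∃ i, ∃ h : (Gt.toSubmodule : Set F) ⊆ ((G i).toSubmodule : Set F),
          @Continuous _ _ Gt.uniformSpace.toTopologicalSpace
            (G i).uniformSpace.toTopologicalSpace (Set.inclusion h)) := by
  have hcover' (x : F) : ∃ i, x ∈ (FrechetSubspace.range (p i)).toSubmodule := by
    simpa only [← SetLike.mem_coe, FrechetSubspace.coe_range] using hcover x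
  exact ⟨fun i ↦ .range (p i), fun i ↦ FrechetSubspace.coe_range (p i), hcover',
    fun Gt ↦ FrechetSubspace.exists_continuous_inclusion _ Gt fun x _ ↦ hcover' x⟩

/-- If `F` is an (LF)-space, i.e. a Hausdorff locally convex space which is the union of the
ranges of a sequence of continuous linear maps `p i : Ei i → F` from Fréchet spaces, then
there is a countable family `G i` of Fréchet subspaces of `F` with `G i` equal (as a set) to
the range of `p i`, covering `F`, and cofinal among all Fréchet subspaces of `F`: every
Fréchet subspace `Gt` of `F` is contained in some `G i` with continuous inclusion. -/
theorem lf_space_frechetSubspace_cofinal_family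
    (F : Type*) [AddCommGroup F] [Module ℝ F] [TopologicalSpace F] [IsTopologicalAddGroup F]
    [ContinuousSMul ℝ F] [LocallyConvexSpace ℝ F] [T2Space F]
    (Ei : ℕ → Type*) [∀ i, AddCommGroup (Ei i)] [∀ i, Module ℝ (Ei i)]
    [∀ i, UniformSpace (Ei i)] [∀ i, IsUniformAddGroup (Ei i)] [∀ i, ContinuousSMul ℝ (Ei i)]
    [∀ i, LocallyConvexSpace ℝ (Ei i)] [∀ i, T2Space (Ei i)] [∀ i, CompleteSpace (Ei i)]
    [∀ i, TopologicalSpace.MetrizableSpace (Ei i)]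
    (p : ∀ i, Ei i →L[ℝ] F)
    (hcover : ∀ x : F, ∃ i, x ∈ Set.range (p i)) :
    ∃ G : ℕ → FrechetSubspace F,
      (∀ i, ((G i).toSubmodule : Set F) = Set.range (p i)) ∧
      (∀ x : F, ∃ i, x ∈ (G i).toSubmodule) ∧
      (∀ Gt : FrechetSubspace F,
        ∃ i, ∃ h : (Gt.toSubmodule : Set F) ⊆ ((G i).toSubmodule : Set F),
          @Continuous _ _ Gt.uniformSpace.toTopologicalSpace
            (G i).uniformSpace.toTopologicalSpace (Set.inclusion h)) :=
  lf_space_frechetSubspace_cofinal_family_general F Ei p hcover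
end

section
/- Let X and Y be sets, and let F and G be locally convex spaces of functions on X and Y respectively. Let b : F' × G' → ℝ be a bilinear form on the continuous duals that is separately continuous when F' and G' carry their weak-* topologies, and define h : X × Y → ℝ by h(x,y) = b(δ_x, δ_y). Then for every x ∈ X the function y ↦ h(x,y) belongs to G, and for every continuous linear functional v on G the function x ↦ v(h(x,·)) belongs to F. -/
/-!
The weak-* topology on `E'` has exactly the evaluations at points of `E` as continuous linear
functionals. Applied to `b (δ_x) ·` this produces `g x ∈ G` with `v (g x) = b (δ_x) v` for all
`v ∈ G'`, and applied to `b · v` it produces `f ∈ F` with `u f = b u v`; taking `u = δ_x`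
shows that `f` is the function `x ↦ v (g x)`.
-/

theorem WeakDual.exists_eq_apply_of_continuous {𝕜 E : Type*} [NontriviallyNormedField 𝕜]
    [AddCommGroup E] [Module 𝕜 E] [TopologicalSpace E] (φ : (E →L[𝕜] 𝕜) →ₗ[𝕜] 𝕜)
    (hφ : Continuous fun v : WeakDual 𝕜 E => φ v) :
    ∃ e : E, ∀ v : E →L[𝕜] 𝕜, φ v = v e := by
  obtain ⟨e, he⟩ := LinearMap.dualEmbedding_surjective (topDualPairing 𝕜 E)
    (⟨φ, hφ⟩ : WeakDual 𝕜 E →L[𝕜] 𝕜)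
  exact ⟨e, fun v => (DFunLike.congr_fun he v).symm⟩

theorem weakStar_bilinear_gives_kernel_function_general
    (X Y : Type*)
    (F : Type*) [AddCommGroup F] [Module ℝ F] [TopologicalSpace F]
    (G : Type*) [AddCommGroup G] [Module ℝ G] [TopologicalSpace G]
    (ιF : F →ₗ[ℝ] (X → ℝ))
    (ιG : G →ₗ[ℝ] (Y → ℝ))
    (δF : X → F →L[ℝ] ℝ) (hδF : ∀ x f, δF x f = ιF f x)
    (δG : Y → G →L[ℝ] ℝ) (hδG : ∀ y g, δG y g = ιG g y)
    (b : (F →L[ℝ] ℝ) →ₗ[ℝ] (G →L[ℝ] ℝ) →ₗ[ℝ] ℝ)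
    (hb₁ : ∀ u : F →L[ℝ] ℝ, Continuous fun v : WeakDual ℝ G => b u v)
    (hb₂ : ∀ v : G →L[ℝ] ℝ, Continuous fun u : WeakDual ℝ F => b u v) :
    ∃ g : X → G, (∀ x y, ιG (g x) y = b (δF x) (δG y)) ∧
      ∀ v : G →L[ℝ] ℝ, ∃ f : F, ∀ x, ιF f x = v (g x) := by
  choose g hg using fun x => WeakDual.exists_eq_apply_of_continuous (b (δF x)) (hb₁ (δF x))
  refine ⟨g, fun x y => by rw [← hδG, hg], fun v => ?_⟩
  obtain ⟨f, hf⟩ := WeakDual.exists_eq_apply_of_continuous (b.flip v) (hb₂ v)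
  exact ⟨f, fun x => by rw [← hδF, ← hf, LinearMap.flip_apply, hg]⟩

/-- Let `F`, `G` be Hausdorff locally convex spaces of functions on sets `X`, `Y`
(realized by injective linear maps `ιF`, `ιG` with continuous evaluation functionals
`δF x`, `δG y`). Let `b` be a bilinear form on `F' × G'` which is separately continuous
for the weak-* topologies, and set `h (x, y) = b (δF x) (δG y)`. Then every `h(x,·)`
belongs to `G`, and for every continuous linear functional `v` on `G` the function
`x ↦ v (h(x,·))` belongs to `F`. -/
theorem weakStar_bilinear_gives_kernel_function
    (X Y : Type*)
    (F : Type*) [AddCommGroup F] [Module ℝ F] [TopologicalSpace F] [IsTopologicalAddGroup F]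
    [ContinuousSMul ℝ F] [LocallyConvexSpace ℝ F] [T2Space F]
    (G : Type*) [AddCommGroup G] [Module ℝ G] [TopologicalSpace G] [IsTopologicalAddGroup G]
    [ContinuousSMul ℝ G] [LocallyConvexSpace ℝ G] [T2Space G]
    (ιF : F →ₗ[ℝ] (X → ℝ)) (hιF : Function.Injective ιF)
    (hevF : ∀ x : X, Continuous fun f : F => ιF f x)
    (ιG : G →ₗ[ℝ] (Y → ℝ)) (hιG : Function.Injective ιG)
    (hevG : ∀ y : Y, Continuous fun g : G => ιG g y)
    (δF : X → F →L[ℝ] ℝ) (hδF : ∀ x f, δF x f = ιF f x)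
    (δG : Y → G →L[ℝ] ℝ) (hδG : ∀ y g, δG y g = ιG g y)
    (b : (F →L[ℝ] ℝ) →ₗ[ℝ] (G →L[ℝ] ℝ) →ₗ[ℝ] ℝ)
    (hb₁ : ∀ u : F →L[ℝ] ℝ, Continuous fun v : WeakDual ℝ G => b u v)
    (hb₂ : ∀ v : G →L[ℝ] ℝ, Continuous fun u : WeakDual ℝ F => b u v) :
    ∃ g : X → G, (∀ x y, ιG (g x) y = b (δF x) (δG y)) ∧
      ∀ v : G →L[ℝ] ℝ, ∃ f : F, ∀ x, ιF f x = v (g x) :=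
  weakStar_bilinear_gives_kernel_function_general X Y F G ιF ιG δF hδF δG hδG b hb₁ hb₂
end

section
/- Let V₁ ⊆ ℝ^{k₁} and V₂ ⊆ ℝ^{k₂} be nonempty cones. Then for every N ∈ ℕ, every B' > 0, and all z₁ ∈ ℂ^{k₁}, z₂ ∈ ℂ^{k₂}: M^{V₁×V₂}_{N,2B'}(z₁,z₂) ≤ M^{V₁}_{N,B'}(z₁) · M^{V₂}_{N,B'}(z₂), where V₁ × V₂ is regarded as a cone in ℝ^{k₁+k₂} with the uniform norm. -/
/-!
Split `β(2B'·max(a, b))` in two: for `β` convex with `β 0 = 0` one has `2 β(u) ≤ β(2u)`, so by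
monotonicity `β(B'a) + β(B'b) ≤ β(2B'·max(a, b))`. This applies to the imaginary parts, since
`|(y₁, y₂)| = max(|y₁|, |y₂|)`, and to the distances, since projecting onto a factor is
1-Lipschitz and maps `V₁ × V₂` into `V₁` (resp. `V₂`), whence `δ_{Vᵢ}(xᵢ) ≤ δ_{V₁×V₂}(x₁, x₂)`.
The polynomial factor is handled by `1 + max(a, b) ≤ (1 + a)(1 + b)`.
-/

/-- The weight `M^U_{N,B'}(x+iy) = (1+|x|)^N exp(−β(B'|y|) − β(B'δ_U(x)))` on `ℂ^k`,
where `ℝ^k` carries the sup norm and `δ_U` is the distance to `U`. -/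
noncomputable def Mnorm {k : ℕ} (β : ℝ → ℝ) (U : Set (Fin k → ℝ)) (N : ℕ) (B' : ℝ)
    (z : Fin k → ℂ) : ℝ :=
  (1 + ‖(fun j => (z j).re : Fin k → ℝ)‖) ^ N *
    Real.exp (-β (B' * ‖(fun j => (z j).im : Fin k → ℝ)‖)
      - β (B' * Metric.infDist (fun j => (z j).re : Fin k → ℝ) U))

/-- The weight `M^U_{N,B'}` on `ℂ^{k₁} × ℂ^{k₂} ≅ ℂ^{k₁+k₂}`, for `U ⊆ ℝ^{k₁} × ℝ^{k₂}`;
here `ℝ^{k₁} × ℝ^{k₂}` carries the sup norm `|(x₁,x₂)| = max (|x₁|, |x₂|)`. -/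
noncomputable def MnormProd {k₁ k₂ : ℕ} (β : ℝ → ℝ)
    (U : Set ((Fin k₁ → ℝ) × (Fin k₂ → ℝ))) (N : ℕ) (B' : ℝ)
    (z : (Fin k₁ → ℂ) × (Fin k₂ → ℂ)) : ℝ :=
  (1 + ‖((fun j => (z.1 j).re, fun j => (z.2 j).re) : (Fin k₁ → ℝ) × (Fin k₂ → ℝ))‖) ^ N *
    Real.exp
      (-β (B' * ‖((fun j => (z.1 j).im, fun j => (z.2 j).im) :
          (Fin k₁ → ℝ) × (Fin k₂ → ℝ))‖)
        - β (B' * Metric.infDist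
            ((fun j => (z.1 j).re, fun j => (z.2 j).re) : (Fin k₁ → ℝ) × (Fin k₂ → ℝ)) U))

open Metric Set

theorem LipschitzWith.infDist_le_of_mapsTo {α γ : Type*} [PseudoMetricSpace α]
    [PseudoMetricSpace γ] {f : α → γ} (hf : LipschitzWith 1 f) {s : Set α} {t : Set γ}
    (hst : MapsTo f s t) (hs : s.Nonempty) (x : α) :
    infDist (f x) t ≤ infDist x s := by
  refine le_of_forall_gt fun c hc => ?_
  obtain ⟨y, hy, hxy⟩ := (infDist_lt_iff hs).1 hc
  calc infDist (f x) t ≤ dist (f x) (f y) := infDist_le_dist_of_mem (hst hy)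
    _ ≤ dist x y := by simpa using hf.dist_le_mul x y
    _ < c := hxy

theorem Metric.infDist_le_infDist_prod_fst {α γ : Type*} [PseudoMetricSpace α]
    [PseudoMetricSpace γ] {s : Set α} {t : Set γ} (hs : s.Nonempty) (ht : t.Nonempty)
    (p : α × γ) : infDist p.1 s ≤ infDist p (s ×ˢ t) :=
  LipschitzWith.prod_fst.infDist_le_of_mapsTo (fun _ hq => hq.1) (hs.prod ht) p

theorem Metric.infDist_le_infDist_prod_snd {α γ : Type*} [PseudoMetricSpace α]
    [PseudoMetricSpace γ] {s : Set α} {t : Set γ} (hs : s.Nonempty) (ht : t.Nonempty)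
    (p : α × γ) : infDist p.2 t ≤ infDist p (s ×ˢ t) :=
  LipschitzWith.prod_snd.infDist_le_of_mapsTo (fun _ hq => hq.2) (hs.prod ht) p

theorem ConvexOn.two_mul_le_map_two_mul {f : ℝ → ℝ} (hf : ConvexOn ℝ (Ici 0) f) (hf0 : f 0 = 0)
    {x : ℝ} (hx : 0 ≤ x) : 2 * f x ≤ f (2 * x) := by
  have h := hf.2 (mem_Ici.2 le_rfl) (mem_Ici.2 (by positivity : (0 : ℝ) ≤ 2 * x))
    (by norm_num : (0 : ℝ) ≤ 1 / 2) (by norm_num : (0 : ℝ) ≤ 1 / 2) (by norm_num)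
  have hmid : (1 / 2 : ℝ) • (0 : ℝ) + (1 / 2 : ℝ) • (2 * x) = x := by simp
  rw [hmid, hf0, smul_eq_mul, smul_eq_mul] at h
  linarith

theorem MonotoneOn.add_le_map_two_mul_of_convexOn {f : ℝ → ℝ} (hfm : MonotoneOn f (Ici 0))
    (hfc : ConvexOn ℝ (Ici 0) f) (hf0 : f 0 = 0) {s t u : ℝ} (hs : 0 ≤ s) (ht : 0 ≤ t)
    (hsu : s ≤ u) (htu : t ≤ u) : f s + f t ≤ f (2 * u) := by
  have hu : 0 ≤ u := hs.trans hsu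
  have hfs : f s ≤ f u := hfm hs hu hsu
  have hft : f t ≤ f u := hfm ht hu htu
  linarith [hfc.two_mul_le_map_two_mul hf0 hu]

theorem one_add_norm_prod_le_mul {E F : Type*} [SeminormedAddCommGroup E]
    [SeminormedAddCommGroup F] (x : E) (y : F) :
    1 + ‖(x, y)‖ ≤ (1 + ‖x‖) * (1 + ‖y‖) := by
  rw [Prod.norm_mk]
  have hx := norm_nonneg x
  have hy := norm_nonneg y
  rcases max_cases ‖x‖ ‖y‖ with ⟨h, -⟩ | ⟨h, -⟩ <;> rw [h] <;> nlinarith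

theorem MnormProd_le_mul_Mnorm_general {k₁ k₂ : ℕ} (β : ℝ → ℝ)
    (hβm : MonotoneOn β (Set.Ici 0))
    (hβconv : ConvexOn ℝ (Set.Ici 0) β) (hβ0 : β 0 = 0)
    (V₁ : Set (Fin k₁ → ℝ)) (hV₁ : V₁.Nonempty)
    (V₂ : Set (Fin k₂ → ℝ)) (hV₂ : V₂.Nonempty)
    (N : ℕ) (B' : ℝ) (hB' : 0 < B') (z₁ : Fin k₁ → ℂ) (z₂ : Fin k₂ → ℂ) :
    MnormProd β (V₁ ×ˢ V₂) N (2 * B') (z₁, z₂) ≤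
      Mnorm β V₁ N B' z₁ * Mnorm β V₂ N B' z₂ := by
  set x : (Fin k₁ → ℝ) × (Fin k₂ → ℝ) := (fun j => (z₁ j).re, fun j => (z₂ j).re)
  set y : (Fin k₁ → ℝ) × (Fin k₂ → ℝ) := (fun j => (z₁ j).im, fun j => (z₂ j).im)
  have hB := hB'.le
  have hy : β (B' * ‖y.1‖) + β (B' * ‖y.2‖) ≤ β (2 * B' * ‖y‖) := by
    rw [mul_assoc]
    exact hβm.add_le_map_two_mul_of_convexOn hβconv hβ0 (by positivity) (by positivity)
      (by gcongr; exact norm_fst_le y) (by gcongr; exact norm_snd_le y)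
  have hd : β (B' * infDist x.1 V₁) + β (B' * infDist x.2 V₂) ≤
      β (2 * B' * infDist x (V₁ ×ˢ V₂)) := by
    rw [mul_assoc]
    exact hβm.add_le_map_two_mul_of_convexOn hβconv hβ0
      (mul_nonneg hB infDist_nonneg) (mul_nonneg hB infDist_nonneg)
      (by gcongr; exact infDist_le_infDist_prod_fst hV₁ hV₂ x)
      (by gcongr; exact infDist_le_infDist_prod_snd hV₁ hV₂ x)
  rw [MnormProd, Mnorm, Mnorm, mul_mul_mul_comm, ← mul_pow, ← Real.exp_add]
  gcongr ?_ ^ N * Real.exp ?_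
  · exact one_add_norm_prod_le_mul x.1 x.2
  · linarith

/-- For nonempty cones `V₁ ⊆ ℝ^{k₁}`, `V₂ ⊆ ℝ^{k₂}`:
`M^{V₁×V₂}_{N,2B'}(z₁,z₂) ≤ M^{V₁}_{N,B'}(z₁) · M^{V₂}_{N,B'}(z₂)`. -/
theorem MnormProd_le_mul_Mnorm {k₁ k₂ : ℕ} (β : ℝ → ℝ)
    (hβc : ContinuousOn β (Set.Ici 0)) (hβm : MonotoneOn β (Set.Ici 0))
    (hβconv : ConvexOn ℝ (Set.Ici 0) β) (hβ0 : β 0 = 0)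
    (hβtop : Filter.Tendsto β Filter.atTop Filter.atTop)
    (V₁ : Set (Fin k₁ → ℝ)) (hV₁ : V₁.Nonempty)
    (hV₁cone : ∀ c : ℝ, 0 < c → ∀ x ∈ V₁, c • x ∈ V₁)
    (V₂ : Set (Fin k₂ → ℝ)) (hV₂ : V₂.Nonempty)
    (hV₂cone : ∀ c : ℝ, 0 < c → ∀ x ∈ V₂, c • x ∈ V₂)
    (N : ℕ) (B' : ℝ) (hB' : 0 < B') (z₁ : Fin k₁ → ℂ) (z₂ : Fin k₂ → ℂ) :
    MnormProd β (V₁ ×ˢ V₂) N (2 * B') (z₁, z₂) ≤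
      Mnorm β V₁ N B' z₁ * Mnorm β V₂ N B' z₂ :=
  MnormProd_le_mul_Mnorm_general β hβm hβconv hβ0 V₁ hV₁ V₂ hV₂ N B' hB' z₁ z₂
end

section
/- Let V₁ ⊆ ℝ^{k₁} and V₂ ⊆ ℝ^{k₂} be nonempty cones, and let f : ℂ^{k₁} → ℂ and g : ℂ^{k₂} → ℂ be entire functions. Define h : ℂ^{k₁+k₂} → ℂ by h(z₁,z₂) = f(z₁)g(z₂). Then h is entire, and for every N ∈ ℕ and B' > 0 one has ‖h‖_{V₁×V₂,N,2B'} ≤ ‖f‖_{V₁,N,B'} · ‖g‖_{V₂,N,B'}. In particular, if B > 0 and ‖f‖_{V₁,N,B'} < ∞ and ‖g‖_{V₂,N,B'} < ∞ for all N ∈ ℕ and B' > B, then ‖h‖_{V₁×V₂,N,B''} < ∞ for all N ∈ ℕ and B'' > 2B (i.e., f ∈ E^{β,B}(V₁) and g ∈ E^{β,B}(V₂) imply h ∈ E^{β,2B}(V₁×V₂)). -/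
open scoped ENNReal

/-- The (possibly infinite) norm `‖f‖_{U,N,B'} = sup_z M^U_{N,B'}(z) |f(z)|`. -/
noncomputable def Enorm {k : ℕ} (β : ℝ → ℝ) (U : Set (Fin k → ℝ)) (N : ℕ) (B' : ℝ)
    (f : (Fin k → ℂ) → ℂ) : ℝ≥0∞ :=
  ⨆ z : Fin k → ℂ, ENNReal.ofReal (Mnorm β U N B' z * ‖f z‖)

/-- The norm `‖h‖_{U,N,B'}` for functions on `ℂ^{k₁} × ℂ^{k₂} ≅ ℂ^{k₁+k₂}`. -/
noncomputable def EnormProd {k₁ k₂ : ℕ} (β : ℝ → ℝ)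
    (U : Set ((Fin k₁ → ℝ) × (Fin k₂ → ℝ))) (N : ℕ) (B' : ℝ)
    (h : (Fin k₁ → ℂ) × (Fin k₂ → ℂ) → ℂ) : ℝ≥0∞ :=
  ⨆ z : (Fin k₁ → ℂ) × (Fin k₂ → ℂ), ENNReal.ofReal (MnormProd β U N B' z * ‖h z‖)

/-!
The weight of the product splits into the product of the weights: the polynomial factor because
`1 + max a b ≤ (1 + a) (1 + b)`, the exponential factors because a convex `β` vanishing at `0` is
superadditive, so that `β (B' a) + β (B' b) ≤ β (B' a + B' b) ≤ β (2 B' max a b)`, and because the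
distance to `V₁ × V₂` dominates both distances to `V₁` and to `V₂`. Taking suprema gives the norm
estimate, and the membership statement follows by applying it at `B'' / 2`.
-/

open Set Metric

namespace ConvexOn

variable {β : ℝ → ℝ}

theorem map_mul_le_mul_of_map_zero (hβ : ConvexOn ℝ (Ici 0) β) (hβ0 : β 0 = 0) {t x : ℝ}
    (ht₀ : 0 ≤ t) (ht₁ : t ≤ 1) (hx : 0 ≤ x) : β (t * x) ≤ t * β x := by
  have := hβ.2 (mem_Ici.2 hx) (mem_Ici.2 le_rfl) ht₀ (sub_nonneg.2 ht₁) (by ring)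
  simpa [hβ0] using this

theorem add_le_map_add_of_map_zero (hβ : ConvexOn ℝ (Ici 0) β) (hβ0 : β 0 = 0) {a b : ℝ}
    (ha : 0 ≤ a) (hb : 0 ≤ b) : β a + β b ≤ β (a + b) := by
  rcases (add_nonneg ha hb).eq_or_lt with hab | hab
  · obtain ⟨rfl, rfl⟩ : a = 0 ∧ b = 0 := ⟨by linarith, by linarith⟩
    simp [hβ0]
  have hdiv {c : ℝ} (hc : 0 ≤ c) (hca : c ≤ a + b) : β c ≤ c / (a + b) * β (a + b) := by
    calc β c = β (c / (a + b) * (a + b)) := by rw [div_mul_cancel₀ _ hab.ne']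
      _ ≤ _ := hβ.map_mul_le_mul_of_map_zero hβ0 (by positivity)
          ((div_le_one hab).2 hca) hab.le
  calc β a + β b ≤ a / (a + b) * β (a + b) + b / (a + b) * β (a + b) :=
        add_le_add (hdiv ha (by linarith)) (hdiv hb (by linarith))
    _ = β (a + b) := by rw [← add_mul, ← add_div, div_self hab.ne', one_mul]

theorem add_le_map_two_mul (hβ : ConvexOn ℝ (Ici 0) β) (hβm : MonotoneOn β (Ici 0))
    (hβ0 : β 0 = 0) {a b c : ℝ} (ha : 0 ≤ a) (hb : 0 ≤ b) (hac : a ≤ c) (hbc : b ≤ c) :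
    β a + β b ≤ β (2 * c) :=
  (hβ.add_le_map_add_of_map_zero hβ0 ha hb).trans <|
    hβm (mem_Ici.2 (add_nonneg ha hb)) (mem_Ici.2 (by linarith)) (by linarith)

end ConvexOn

theorem Metric.infDist_fst_le_infDist_prod {α γ : Type*} [PseudoMetricSpace α]
    [PseudoMetricSpace γ] {s : Set α} {t : Set γ} (hst : (s ×ˢ t).Nonempty) (x : α × γ) :
    infDist x.1 s ≤ infDist x (s ×ˢ t) :=
  (le_infDist hst).2 fun y hy =>
    (infDist_le_dist_of_mem hy.1).trans (by rw [Prod.dist_eq]; exact le_max_left _ _)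

theorem Metric.infDist_snd_le_infDist_prod {α γ : Type*} [PseudoMetricSpace α]
    [PseudoMetricSpace γ] {s : Set α} {t : Set γ} (hst : (s ×ˢ t).Nonempty) (x : α × γ) :
    infDist x.2 t ≤ infDist x (s ×ˢ t) :=
  (le_infDist hst).2 fun y hy =>
    (infDist_le_dist_of_mem hy.2).trans (by rw [Prod.dist_eq]; exact le_max_right _ _)

theorem one_add_norm_prod_le {E F : Type*} [SeminormedAddCommGroup E] [SeminormedAddCommGroup F]
    (x : E × F) : 1 + ‖x‖ ≤ (1 + ‖x.1‖) * (1 + ‖x.2‖) := by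
  rw [Prod.norm_def]
  rcases max_cases ‖x.1‖ ‖x.2‖ with ⟨h, _⟩ | ⟨h, _⟩ <;> rw [h] <;>
    nlinarith [norm_nonneg x.1, norm_nonneg x.2]

theorem Mnorm_nonneg {k : ℕ} (β : ℝ → ℝ) (U : Set (Fin k → ℝ)) (N : ℕ) (B' : ℝ)
    (z : Fin k → ℂ) : 0 ≤ Mnorm β U N B' z := by
  unfold Mnorm; positivity

section Weights

variable {k₁ k₂ : ℕ} {β : ℝ → ℝ} {V₁ : Set (Fin k₁ → ℝ)} {V₂ : Set (Fin k₂ → ℝ)}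

theorem MnormProd_le_mul (hβ : ConvexOn ℝ (Ici 0) β) (hβm : MonotoneOn β (Ici 0))
    (hβ0 : β 0 = 0) (hV : (V₁ ×ˢ V₂).Nonempty) (N : ℕ) {B' : ℝ} (hB' : 0 ≤ B')
    (z : (Fin k₁ → ℂ) × (Fin k₂ → ℂ)) :
    MnormProd β (V₁ ×ˢ V₂) N (2 * B') z ≤ Mnorm β V₁ N B' z.1 * Mnorm β V₂ N B' z.2 := by
  set x : (Fin k₁ → ℝ) × (Fin k₂ → ℝ) := (fun j => (z.1 j).re, fun j => (z.2 j).re)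
  set y : (Fin k₁ → ℝ) × (Fin k₂ → ℝ) := (fun j => (z.1 j).im, fun j => (z.2 j).im)
  have hpoly : (1 + ‖x‖) ^ N ≤ (1 + ‖x.1‖) ^ N * (1 + ‖x.2‖) ^ N := by
    rw [← mul_pow]
    exact pow_le_pow_left₀ (by positivity) (one_add_norm_prod_le x) N
  have him : β (B' * ‖y.1‖) + β (B' * ‖y.2‖) ≤ β (2 * B' * ‖y‖) := by
    rw [mul_assoc]
    exact hβ.add_le_map_two_mul hβm hβ0 (mul_nonneg hB' (norm_nonneg _))
      (mul_nonneg hB' (norm_nonneg _)) (mul_le_mul_of_nonneg_left (norm_fst_le y) hB')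
      (mul_le_mul_of_nonneg_left (norm_snd_le y) hB')
  have hdist : β (B' * infDist x.1 V₁) + β (B' * infDist x.2 V₂)
      ≤ β (2 * B' * infDist x (V₁ ×ˢ V₂)) := by
    rw [mul_assoc]
    exact hβ.add_le_map_two_mul hβm hβ0 (mul_nonneg hB' infDist_nonneg)
      (mul_nonneg hB' infDist_nonneg) (mul_le_mul_of_nonneg_left (infDist_fst_le_infDist_prod hV x) hB')
      (mul_le_mul_of_nonneg_left (infDist_snd_le_infDist_prod hV x) hB')
  have hexp : Real.exp (-β (2 * B' * ‖y‖) - β (2 * B' * infDist x (V₁ ×ˢ V₂)))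
      ≤ Real.exp (-β (B' * ‖y.1‖) - β (B' * infDist x.1 V₁)) *
        Real.exp (-β (B' * ‖y.2‖) - β (B' * infDist x.2 V₂)) := by
    rw [← Real.exp_add]
    exact Real.exp_le_exp.2 (by linarith)
  calc MnormProd β (V₁ ×ˢ V₂) N (2 * B') z
      ≤ ((1 + ‖x.1‖) ^ N * (1 + ‖x.2‖) ^ N) *
        (Real.exp (-β (B' * ‖y.1‖) - β (B' * infDist x.1 V₁)) *
          Real.exp (-β (B' * ‖y.2‖) - β (B' * infDist x.2 V₂))) :=
        mul_le_mul hpoly hexp (Real.exp_pos _).le (by positivity)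
    _ = Mnorm β V₁ N B' z.1 * Mnorm β V₂ N B' z.2 := by
        simp only [Mnorm, x, y]; ring

theorem EnormProd_le_mul (hβ : ConvexOn ℝ (Ici 0) β) (hβm : MonotoneOn β (Ici 0))
    (hβ0 : β 0 = 0) (hV : (V₁ ×ˢ V₂).Nonempty) (N : ℕ) {B' : ℝ} (hB' : 0 ≤ B')
    {f : (Fin k₁ → ℂ) → ℂ} {g : (Fin k₂ → ℂ) → ℂ} {h : (Fin k₁ → ℂ) × (Fin k₂ → ℂ) → ℂ}
    (hh : ∀ z₁ z₂, h (z₁, z₂) = f z₁ * g z₂) :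
    EnormProd β (V₁ ×ˢ V₂) N (2 * B') h ≤ Enorm β V₁ N B' f * Enorm β V₂ N B' g := by
  refine iSup_le fun z => ?_
  have hpoint : MnormProd β (V₁ ×ˢ V₂) N (2 * B') z * ‖h z‖
      ≤ (Mnorm β V₁ N B' z.1 * ‖f z.1‖) * (Mnorm β V₂ N B' z.2 * ‖g z.2‖) := by
    rw [hh, norm_mul, mul_mul_mul_comm]
    exact mul_le_mul_of_nonneg_right (MnormProd_le_mul hβ hβm hβ0 hV N hB' z) (by positivity)
  calc ENNReal.ofReal (MnormProd β (V₁ ×ˢ V₂) N (2 * B') z * ‖h z‖)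
      ≤ ENNReal.ofReal (Mnorm β V₁ N B' z.1 * ‖f z.1‖) *
          ENNReal.ofReal (Mnorm β V₂ N B' z.2 * ‖g z.2‖) := by
        rw [← ENNReal.ofReal_mul (mul_nonneg (Mnorm_nonneg ..) (norm_nonneg _))]
        exact ENNReal.ofReal_le_ofReal hpoint
    _ ≤ Enorm β V₁ N B' f * Enorm β V₂ N B' g :=
        mul_le_mul' (le_iSup (fun w => ENNReal.ofReal (Mnorm β V₁ N B' w * ‖f w‖)) z.1)
          (le_iSup (fun w => ENNReal.ofReal (Mnorm β V₂ N B' w * ‖g w‖)) z.2)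

end Weights

theorem mul_mem_EbetaProd_general {k₁ k₂ : ℕ} (β : ℝ → ℝ)
    (hβm : MonotoneOn β (Set.Ici 0))
    (hβconv : ConvexOn ℝ (Set.Ici 0) β) (hβ0 : β 0 = 0)
    (V₁ : Set (Fin k₁ → ℝ)) (hV₁ : V₁.Nonempty)
    (V₂ : Set (Fin k₂ → ℝ)) (hV₂ : V₂.Nonempty)
    (f : (Fin k₁ → ℂ) → ℂ) (hf : Differentiable ℂ f)
    (g : (Fin k₂ → ℂ) → ℂ) (hg : Differentiable ℂ g)
    (h : (Fin k₁ → ℂ) × (Fin k₂ → ℂ) → ℂ) (hh : ∀ z₁ z₂, h (z₁, z₂) = f z₁ * g z₂) :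
    Differentiable ℂ h ∧
    (∀ (N : ℕ) (B' : ℝ), 0 < B' →
      EnormProd β (V₁ ×ˢ V₂) N (2 * B') h ≤ Enorm β V₁ N B' f * Enorm β V₂ N B' g) ∧
    (∀ B : ℝ, 0 < B →
      (∀ (N : ℕ) (B' : ℝ), B < B' → Enorm β V₁ N B' f < ⊤) →
      (∀ (N : ℕ) (B' : ℝ), B < B' → Enorm β V₂ N B' g < ⊤) →
      ∀ (N : ℕ) (B'' : ℝ), 2 * B < B'' → EnormProd β (V₁ ×ˢ V₂) N B'' h < ⊤) := by
  have hV : (V₁ ×ˢ V₂).Nonempty := hV₁.prod hV₂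
  have hle (N : ℕ) (B' : ℝ) (hB' : 0 < B') :=
    EnormProd_le_mul hβconv hβm hβ0 hV N hB'.le hh
  refine ⟨?_, hle, fun B hB hfB hgB N B'' hB'' => ?_⟩
  · rw [show h = fun z => f z.1 * g z.2 from funext fun z => hh z.1 z.2]
    exact (hf.comp differentiable_fst).mul (hg.comp differentiable_snd)
  have hhalf : B < B'' / 2 := by linarith
  calc EnormProd β (V₁ ×ˢ V₂) N B'' h = EnormProd β (V₁ ×ˢ V₂) N (2 * (B'' / 2)) h := by
        rw [mul_div_cancel₀ _ two_ne_zero]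
    _ ≤ Enorm β V₁ N (B'' / 2) f * Enorm β V₂ N (B'' / 2) g := hle N _ (by linarith)
    _ < ⊤ := ENNReal.mul_lt_top (hfB N _ hhalf) (hgB N _ hhalf)

/-- If `f`, `g` are entire and `h (z₁, z₂) = f z₁ * g z₂`, then `h` is entire and
`‖h‖_{V₁×V₂,N,2B'} ≤ ‖f‖_{V₁,N,B'} ‖g‖_{V₂,N,B'}`; in particular `f ∈ E^{β,B}(V₁)` and
`g ∈ E^{β,B}(V₂)` imply `h ∈ E^{β,2B}(V₁ × V₂)`. -/
theorem mul_mem_EbetaProd {k₁ k₂ : ℕ} (β : ℝ → ℝ)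
    (hβc : ContinuousOn β (Set.Ici 0)) (hβm : MonotoneOn β (Set.Ici 0))
    (hβconv : ConvexOn ℝ (Set.Ici 0) β) (hβ0 : β 0 = 0)
    (hβtop : Filter.Tendsto β Filter.atTop Filter.atTop)
    (V₁ : Set (Fin k₁ → ℝ)) (hV₁ : V₁.Nonempty)
    (hV₁cone : ∀ c : ℝ, 0 < c → ∀ x ∈ V₁, c • x ∈ V₁)
    (V₂ : Set (Fin k₂ → ℝ)) (hV₂ : V₂.Nonempty)
    (hV₂cone : ∀ c : ℝ, 0 < c → ∀ x ∈ V₂, c • x ∈ V₂)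
    (f : (Fin k₁ → ℂ) → ℂ) (hf : Differentiable ℂ f)
    (g : (Fin k₂ → ℂ) → ℂ) (hg : Differentiable ℂ g)
    (h : (Fin k₁ → ℂ) × (Fin k₂ → ℂ) → ℂ) (hh : ∀ z₁ z₂, h (z₁, z₂) = f z₁ * g z₂) :
    Differentiable ℂ h ∧
    (∀ (N : ℕ) (B' : ℝ), 0 < B' →
      EnormProd β (V₁ ×ˢ V₂) N (2 * B') h ≤ Enorm β V₁ N B' f * Enorm β V₂ N B' g) ∧
    (∀ B : ℝ, 0 < B →
      (∀ (N : ℕ) (B' : ℝ), B < B' → Enorm β V₁ N B' f < ⊤) →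
      (∀ (N : ℕ) (B' : ℝ), B < B' → Enorm β V₂ N B' g < ⊤) →
      ∀ (N : ℕ) (B'' : ℝ), 2 * B < B'' → EnormProd β (V₁ ×ˢ V₂) N B'' h < ⊤) :=
  mul_mem_EbetaProd_general β hβm hβconv hβ0 V₁ hV₁ V₂ hV₂ f hf g hg h hh
end

section
/- Let U be a nonempty cone in ℝ^k and B > 0. Then the family M^{U,B} = {M^U_{N,B'} : N ∈ ℕ, B' > B} satisfies condition (II): for every N ∈ ℕ and B' > B there exist N' ∈ ℕ, B'' > B, ε > 0, and C > 0 such that M^U_{N,B'}(z) ≤ C · M^U_{N',B''}(z + ζ) for all z, ζ ∈ ℂ^k with |ζ| ≤ ε. -/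
/-!
Shifting `z` by `ζ` with `|ζ| ≤ 1` moves `|x|`, `|y|` and `δ_U(x)` by at most `1`. Peetre's
inequality `1 + |x| ≤ 2 (1 + |x + ξ|)` handles the polynomial factor. For the exponential factors,
lowering `B'` to any `B'' ∈ (0, B')` absorbs the unit shift: `B'' (t + 1) ≤ B' t` once `t` is
large, and for bounded `t` the monotone `β` costs only a bounded amount.
-/

lemma one_add_norm_le_mul_one_add_norm_add {E : Type*} [SeminormedAddCommGroup E] (x ξ : E) :
    1 + ‖x‖ ≤ (1 + ‖ξ‖) * (1 + ‖x + ξ‖) := by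
  have h : ‖x‖ ≤ ‖x + ξ‖ + ‖ξ‖ := by
    simpa using norm_sub_le (x + ξ) ξ
  nlinarith [norm_nonneg ξ, norm_nonneg (x + ξ)]

lemma norm_re_le_norm {ι : Type*} [Fintype ι] (ζ : ι → ℂ) :
    ‖(fun j => (ζ j).re : ι → ℝ)‖ ≤ ‖ζ‖ :=
  (pi_norm_le_iff_of_nonneg (norm_nonneg ζ)).mpr fun j =>
    (Complex.abs_re_le_norm _).trans (norm_le_pi_norm ζ j)

lemma norm_im_le_norm {ι : Type*} [Fintype ι] (ζ : ι → ℂ) :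
    ‖(fun j => (ζ j).im : ι → ℝ)‖ ≤ ‖ζ‖ :=
  (pi_norm_le_iff_of_nonneg (norm_nonneg ζ)).mpr fun j =>
    (Complex.abs_im_le_norm _).trans (norm_le_pi_norm ζ j)

lemma MonotoneOn.exists_comp_mul_add_le {β : ℝ → ℝ} (hβ : MonotoneOn β (Set.Ici 0))
    {b b' c : ℝ} (hb : 0 < b) (hbb' : b < b') (hc : 0 ≤ c) :
    ∃ K, ∀ t s, 0 ≤ t → 0 ≤ s → s ≤ t + c → β (b * s) ≤ β (b' * t) + K := by
  set T := b * c / (b' - b)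
  have hT : 0 ≤ T := by unfold T; exact div_nonneg (by positivity) (by linarith)
  refine ⟨β (b * (T + c)) - β 0, fun t s ht hs hst => ?_⟩
  have hβt : β 0 ≤ β (b' * t) :=
    hβ (Set.mem_Ici.mpr le_rfl) (Set.mem_Ici.mpr (by nlinarith)) (by nlinarith)
  rcases le_or_gt T t with hTt | htT
  · have hbT : b * c ≤ (b' - b) * t := by
      linarith [(div_le_iff₀ (sub_pos.mpr hbb')).mp hTt]
    have hlarge : β (b * s) ≤ β (b' * t) :=
      hβ (Set.mem_Ici.mpr (by positivity)) (Set.mem_Ici.mpr (by nlinarith)) (by nlinarith)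
    linarith [hβ (Set.mem_Ici.mpr le_rfl) (Set.mem_Ici.mpr (by positivity))
      (by positivity : 0 ≤ b * (T + c))]
  · have hsmall : β (b * s) ≤ β (b * (T + c)) :=
      hβ (Set.mem_Ici.mpr (by positivity)) (Set.mem_Ici.mpr (by positivity)) (by nlinarith)
    linarith

lemma re_add_eq {ι : Type*} (z ζ : ι → ℂ) :
    (fun j => ((z + ζ) j).re : ι → ℝ) = (fun j => (z j).re) + fun j => (ζ j).re := by
  funext j; simp

lemma im_add_eq {ι : Type*} (z ζ : ι → ℂ) :
    (fun j => ((z + ζ) j).im : ι → ℝ) = (fun j => (z j).im) + fun j => (ζ j).im := by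
  funext j; simp

lemma Mnorm_le_mul_Mnorm_add {k : ℕ} {β : ℝ → ℝ} (hβ : MonotoneOn β (Set.Ici 0))
    (U : Set (Fin k → ℝ)) (N : ℕ) {B' B'' : ℝ} (hB'' : 0 < B'') (hB''B' : B'' < B') :
    ∃ C, 0 < C ∧ ∀ z ζ : Fin k → ℂ, ‖ζ‖ ≤ 1 →
      Mnorm β U N B' z ≤ C * Mnorm β U N B'' (z + ζ) := by
  obtain ⟨K, hK⟩ := hβ.exists_comp_mul_add_le hB'' hB''B' zero_le_one
  refine ⟨2 ^ N * Real.exp (2 * K), by positivity, fun z ζ hζ => ?_⟩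
  set x : Fin k → ℝ := fun j => (z j).re
  set y : Fin k → ℝ := fun j => (z j).im
  set ξ : Fin k → ℝ := fun j => (ζ j).re
  set η : Fin k → ℝ := fun j => (ζ j).im
  have hξ : ‖ξ‖ ≤ 1 := (norm_re_le_norm ζ).trans hζ
  have hη : ‖η‖ ≤ 1 := (norm_im_le_norm ζ).trans hζ
  have hpoly : (1 + ‖x‖) ^ N ≤ 2 ^ N * (1 + ‖x + ξ‖) ^ N := by
    rw [← mul_pow]
    gcongr
    calc 1 + ‖x‖ ≤ (1 + ‖ξ‖) * (1 + ‖x + ξ‖) := one_add_norm_le_mul_one_add_norm_add x ξ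
      _ ≤ 2 * (1 + ‖x + ξ‖) := by gcongr; linarith
  have him : β (B'' * ‖y + η‖) ≤ β (B' * ‖y‖) + K :=
    hK _ _ (norm_nonneg _) (norm_nonneg _) ((norm_add_le y η).trans (by linarith))
  have hdist : β (B'' * Metric.infDist (x + ξ) U) ≤ β (B' * Metric.infDist x U) + K := by
    refine hK _ _ Metric.infDist_nonneg Metric.infDist_nonneg ?_
    have := Metric.infDist_le_infDist_add_dist (x := x + ξ) (y := x) (s := U)
    rw [dist_eq_norm, add_sub_cancel_left] at this
    linarith
  have hexp : Real.exp (-β (B' * ‖y‖) - β (B' * Metric.infDist x U)) ≤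
      Real.exp (2 * K) * Real.exp (-β (B'' * ‖y + η‖) - β (B'' * Metric.infDist (x + ξ) U)) := by
    rw [← Real.exp_add]
    exact Real.exp_le_exp.mpr (by linarith)
  unfold Mnorm
  rw [re_add_eq, im_add_eq]
  calc (1 + ‖x‖) ^ N * Real.exp (-β (B' * ‖y‖) - β (B' * Metric.infDist x U))
      ≤ (2 ^ N * (1 + ‖x + ξ‖) ^ N) *
          (Real.exp (2 * K) *
            Real.exp (-β (B'' * ‖y + η‖) - β (B'' * Metric.infDist (x + ξ) U))) :=
        mul_le_mul hpoly hexp (Real.exp_pos _).le (by positivity)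
    _ = _ := by ring

theorem Mnorm_condition_II_general {k : ℕ} (β : ℝ → ℝ)
    (hβm : MonotoneOn β (Set.Ici 0))
    (U : Set (Fin k → ℝ))
    (B : ℝ) (hB : 0 < B) (N : ℕ) (B' : ℝ) (hB' : B < B') :
    ∃ (N' : ℕ) (B'' ε C : ℝ), B < B'' ∧ 0 < ε ∧ 0 < C ∧
      ∀ z ζ : Fin k → ℂ, ‖ζ‖ ≤ ε →
        Mnorm β U N B' z ≤ C * Mnorm β U N' B'' (z + ζ) := by
  obtain ⟨C, hC, hbound⟩ :=
    Mnorm_le_mul_Mnorm_add hβm U N (B' := B') (B'' := (B + B') / 2) (by linarith) (by linarith)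
  exact ⟨N, (B + B') / 2, 1, C, by linarith, one_pos, hC, hbound⟩

/-- **Condition (II) for the family `M^{U,B}`.**  For every `N ∈ ℕ` and `B' > B` there are
`N' ∈ ℕ`, `B'' > B`, `ε > 0` and `C > 0` such that
`M^U_{N,B'}(z) ≤ C · M^U_{N',B''}(z + ζ)` for all `z, ζ ∈ ℂ^k` with `|ζ| ≤ ε`. -/
theorem Mnorm_condition_II {k : ℕ} (β : ℝ → ℝ)
    (hβc : ContinuousOn β (Set.Ici 0)) (hβm : MonotoneOn β (Set.Ici 0))
    (hβconv : ConvexOn ℝ (Set.Ici 0) β) (hβ0 : β 0 = 0)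
    (hβtop : Filter.Tendsto β Filter.atTop Filter.atTop)
    (U : Set (Fin k → ℝ)) (hUne : U.Nonempty)
    (hUcone : ∀ c : ℝ, 0 < c → ∀ x ∈ U, c • x ∈ U)
    (B : ℝ) (hB : 0 < B) (N : ℕ) (B' : ℝ) (hB' : B < B') :
    ∃ (N' : ℕ) (B'' ε C : ℝ), B < B'' ∧ 0 < ε ∧ 0 < C ∧
      ∀ z ζ : Fin k → ℂ, ‖ζ‖ ≤ ε →
        Mnorm β U N B' z ≤ C * Mnorm β U N' B'' (z + ζ) :=
  Mnorm_condition_II_general β hβm U B hB N B' hB'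
end
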